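/- arXiv:2507.17072 — 7 statements merged into one kernel-verified Lean document; each statement's English description precedes it below -/
import Mathlib

section
/- Let σ_n be a uniformly random permutation of {1,…,n} and γ the Euler–Mascheroni constant. For every complex number x, the infinite product Φ(x) := e^{γ(x−1)} ∏_{k=1}^∞ (1 + (x−1)/k) e^{−(x−1)/k} converges, and there exists a constant c_x such that for all n ≥ 1, |E[x^{C(σ_n)}] · e^{−(x−1) log n} − Φ(x)| ≤ c_x / n. In particular C(σ_n) converges in the mod-Poisson sense at speed log n with limiting function Φ. -/
/-- The total number of cycles of a permutation of `{1,…,n}`, counting fixed points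
as cycles of length one. -/
def cycleCount {n : ℕ} (σ : Equiv.Perm (Fin n)) : ℕ :=
  σ.cycleType.card + (n - σ.cycleType.sum)

open Equiv Equiv.Perm Finset

variable {α : Type*} [DecidableEq α] [Fintype α]

/-- cycle count including fixed points, for a general fintype. -/
def ccount (f : Perm α) : ℕ := f.cycleType.card + (Fintype.card α - f.cycleType.sum)

lemma ccount_swap (f : Perm α) (x : α) (hx : f x ≠ x) :
    ccount (swap x (f x) * f) = ccount f + 1 := by
  classical
  set c := f.cycleOf x with hc_def
  have hc : c.IsCycle := isCycle_cycleOf f hx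
  have hmem : c ∈ f.cycleFactorsFinset := cycleOf_mem_cycleFactorsFinset_iff.2 (mem_support.2 hx)
  have hdisj : Perm.Disjoint (f * c⁻¹) c := disjoint_mul_inv_of_mem_cycleFactorsFinset hmem
  set d := f * c⁻¹ with hd_def
  have hf_eq : f = d * c := by simp [hd_def, mul_assoc]
  have hcx : c x = f x := cycleOf_apply_self f x
  have hxc : x ∈ c.support := by
    rw [hc_def, mem_support_cycleOf_iff]
    exact ⟨Perm.SameCycle.refl _ _, mem_support.2 hx⟩
  have hfxc : f x ∈ c.support := by
    rw [hc_def, mem_support_cycleOf_iff]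
    exact ⟨Perm.sameCycle_apply_right.2 (Perm.SameCycle.refl _ _), mem_support.2 hx⟩
  have hswap_supp : (swap x (f x)).support ⊆ c.support := by
    rw [support_swap hx.symm]
    intro y hy
    simp only [Finset.mem_insert, Finset.mem_singleton] at hy
    rcases hy with rfl | rfl
    · exact hxc
    · exact hfxc
  have hdisj_swap : Perm.Disjoint d (swap x (f x)) := by
    rw [Perm.disjoint_iff_disjoint_support] at hdisj ⊢
    exact hdisj.mono_right hswap_supp
  have hkey : swap x (f x) * f = d * (swap x (f x) * c) := by
    calc swap x (f x) * f = swap x (f x) * (d * c) := by rw [← hf_eq]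
    _ = d * (swap x (f x) * c) := by rw [← mul_assoc, ← hdisj_swap.commute.eq, mul_assoc]
  have hsum_le : f.cycleType.sum ≤ Fintype.card α := by
    rw [Perm.sum_cycleType]
    exact Finset.card_le_univ _
  have hctf : f.cycleType = d.cycleType + c.cycleType :=
    hf_eq ▸ Perm.Disjoint.cycleType_mul hdisj
  by_cases h2 : f (f x) = x
  · -- c is the transposition
    have hcswap : c = swap x (f x) := by
      have := hc.eq_swap_of_apply_apply_eq_self (by rw [hcx]; exact hx)
        (by rw [hcx, cycleOf_apply_apply_self]; exact h2)
      rwa [hcx] at this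
    have h1 : swap x (f x) * c = 1 := by rw [hcswap, swap_mul_self]
    have hg : swap x (f x) * f = d := by rw [hkey, h1, mul_one]
    have hctc : c.cycleType = {2} := by
      rw [hc.cycleType, hcswap, card_support_swap hx.symm]
    have hcard : f.cycleType.card = d.cycleType.card + 1 := by
      rw [hctf, hctc]; simp
    have hsum : f.cycleType.sum = d.cycleType.sum + 2 := by
      rw [hctf, hctc]; simp
    unfold ccount
    rw [hg, hcard, hsum]
    omega
  · have hccx : c (c x) ≠ x := by rw [hcx, cycleOf_apply_apply_self]; exact h2
    have hcx_ne : c x ≠ x := by rw [hcx]; exact hx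
    have hcyc' : (swap x (c x) * c).IsCycle := hc.swap_mul hcx_ne hccx
    have hsupp' : (swap x (c x) * c).support = c.support \ {x} := support_swap_mul_eq c x hccx
    have hkey' : swap x (f x) * f = d * (swap x (c x) * c) := by rw [hkey, hcx]
    have hdisj' : Perm.Disjoint d (swap x (c x) * c) := by
      rw [Perm.disjoint_iff_disjoint_support] at hdisj ⊢
      refine hdisj.mono_right ?_
      rw [hsupp']
      exact Finset.sdiff_subset
    have hctg : (swap x (f x) * f).cycleType = d.cycleType + {(swap x (c x) * c).support.card} := by
      rw [hkey', Perm.Disjoint.cycleType_mul hdisj', hcyc'.cycleType]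
    have hcard_supp' : (swap x (c x) * c).support.card = c.support.card - 1 := by
      rw [hsupp', Finset.card_sdiff_of_subset (Finset.singleton_subset_iff.2 hxc), Finset.card_singleton]
    have h2le : 2 ≤ c.support.card := hc.two_le_card_support
    have hctc : c.cycleType = {c.support.card} := by rw [hc.cycleType]
    unfold ccount
    rw [hctg, hctf, hctc, hcard_supp']
    simp only [Multiset.card_add, Multiset.card_singleton, Multiset.sum_add,
      Multiset.sum_singleton]
    have hsum_le' : d.cycleType.sum + c.support.card ≤ Fintype.card α := by
      rw [hctf, hctc] at hsum_le
      simpa using hsum_le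
    omega

/-- The embedding equivalence `Fin n ≃ {x : Fin (n+1) // x ≠ 0}`. -/
def finSuccNeZero (n : ℕ) : Fin n ≃ {x : Fin (n + 1) // x ≠ 0} where
  toFun i := ⟨i.succ, Fin.succ_ne_zero i⟩
  invFun x := (x : Fin (n + 1)).pred x.2
  left_inv i := by simp
  right_inv x := by simp

lemma decomposeFin_zero_eq_extend {n : ℕ} (e : Perm (Fin n)) :
    Equiv.Perm.decomposeFin.symm (0, e) = e.extendDomain (finSuccNeZero n) := by
  ext a
  refine Fin.cases ?_ (fun i => ?_) a
  · rw [Equiv.Perm.decomposeFin_symm_apply_zero,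
      Perm.extendDomain_apply_not_subtype _ _ (by simp)]
  · rw [Equiv.Perm.decomposeFin_symm_apply_succ,
      Perm.extendDomain_apply_subtype e (finSuccNeZero n) (Fin.succ_ne_zero i)]
    simp [finSuccNeZero]

lemma cycleType_decomposeFin_zero {n : ℕ} (e : Perm (Fin n)) :
    (Equiv.Perm.decomposeFin.symm (0, e)).cycleType = e.cycleType := by
  rw [decomposeFin_zero_eq_extend, Perm.cycleType_extendDomain]

lemma ccount_eq_cycleCount {n : ℕ} (σ : Perm (Fin n)) : ccount σ = cycleCount σ := by
  simp [ccount, cycleCount, Fintype.card_fin]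

lemma ccount_decomposeFin {n : ℕ} (p : Fin (n + 1)) (e : Perm (Fin n)) :
    ccount (Equiv.Perm.decomposeFin.symm (p, e)) = ccount e + (if p = 0 then 1 else 0) := by
  have hsum_le : e.cycleType.sum ≤ n := by
    rw [Perm.sum_cycleType]
    simpa using Finset.card_le_univ e.support
  have hhat : ccount (Equiv.Perm.decomposeFin.symm (0, e)) = ccount e + 1 := by
    unfold ccount
    rw [cycleType_decomposeFin_zero, Fintype.card_fin, Fintype.card_fin]
    omega
  rcases eq_or_ne p 0 with rfl | hp
  · rw [hhat, if_pos rfl]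
  · rw [if_neg hp]
    set σ := Equiv.Perm.decomposeFin.symm (p, e) with hσ
    have hσ0 : σ 0 = p := Equiv.Perm.decomposeFin_symm_apply_zero p e
    have hswap : swap 0 (σ 0) * σ = Equiv.Perm.decomposeFin.symm (0, e) := by
      ext a
      refine Fin.cases ?_ (fun i => ?_) a
      · simp [hσ0]
      · simp only [Perm.mul_apply, hσ, Equiv.Perm.decomposeFin_symm_apply_succ, hσ0]
        rw [Equiv.Perm.decomposeFin_symm_apply_zero, swap_apply_self]
        simp
    have := ccount_swap σ 0 (by rw [hσ0]; exact hp)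
    rw [hswap, hhat] at this
    omega

lemma sum_pow_cycleCount (x : ℂ) :
    ∀ n : ℕ, (∑ σ : Perm (Fin n), x ^ cycleCount σ) = ∏ k ∈ Finset.range n, (x + k) := by
  intro n
  induction n with
  | zero =>
    rw [Finset.range_zero, Finset.prod_empty]
    rw [Finset.sum_eq_single (1 : Perm (Fin 0)) (fun σ _ _ => absurd (Subsingleton.elim σ 1) ‹_›)
      (fun h => absurd (Finset.mem_univ _) h)]
    simp [cycleCount]
  | succ n ih =>
    rw [Finset.univ_perm_fin_succ, Finset.sum_map, Finset.prod_range_succ, ← ih]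
    rw [Fintype.sum_prod_type]
    have hterm : ∀ (p : Fin (n+1)) (e : Perm (Fin n)),
        x ^ cycleCount (Equiv.Perm.decomposeFin.symm (p, e)) =
        if p = 0 then x ^ cycleCount e * x else x ^ cycleCount e := by
      intro p e
      have h := ccount_decomposeFin p e
      rw [ccount_eq_cycleCount, ccount_eq_cycleCount] at h
      split_ifs with hp
      · rw [show cycleCount (Equiv.Perm.decomposeFin.symm (p, e)) = cycleCount e + 1 by
          rw [h, if_pos hp], pow_succ]
      · rw [show cycleCount (Equiv.Perm.decomposeFin.symm (p, e)) = cycleCount e by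
          rw [h, if_neg hp, add_zero]]
    have hsum : ∀ A B : ℂ, (∑ p : Fin (n+1), if p = 0 then A else B) = A + n * B := by
      intro A B
      rw [Finset.sum_ite, Finset.sum_const, Finset.sum_const, Finset.filter_eq' Finset.univ]
      rw [if_pos (Finset.mem_univ _), Finset.card_singleton]
      have : Finset.filter (fun p : Fin (n+1) => ¬ p = 0) Finset.univ = Finset.univ.erase 0 := by
        ext p; simp [Finset.mem_erase, and_comm]
      rw [this, Finset.card_erase_of_mem (Finset.mem_univ _), Finset.card_univ, Fintype.card_fin]
      simp [nsmul_eq_mul]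
    calc ∑ p : Fin (n+1), ∑ e : Perm (Fin n),
          x ^ cycleCount ((Equiv.Perm.decomposeFin.symm.toEmbedding) (p, e))
        = ∑ e : Perm (Fin n), ∑ p : Fin (n+1),
            (if p = 0 then x ^ cycleCount e * x else x ^ cycleCount e) := by
          rw [Finset.sum_comm]
          exact Finset.sum_congr rfl fun e _ => Finset.sum_congr rfl fun p _ => hterm p e
      _ = ∑ e : Perm (Fin n), (x ^ cycleCount e * x + n * x ^ cycleCount e) := by
          exact Finset.sum_congr rfl fun e _ => hsum _ _
      _ = (∑ σ : Perm (Fin n), x ^ cycleCount σ) * (x + n) := by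
          rw [Finset.sum_add_distrib, ← Finset.sum_mul, ← Finset.mul_sum]
          ring

open Finset Complex Real

/-- Reduce a `c/n` bound for all `n ≥ 1` to an eventual one. -/
lemma eventually_div_bound (err : ℕ → ℝ) (herr : ∀ n, 0 ≤ err n) (N : ℕ) (C : ℝ) (hC : 0 ≤ C)
    (h : ∀ n : ℕ, N ≤ n → err n ≤ C / n) : ∃ c : ℝ, ∀ n : ℕ, 1 ≤ n → err n ≤ c / n := by
  refine ⟨C + ∑ m ∈ Finset.range N, m * err m, fun n hn => ?_⟩
  have hs : 0 ≤ ∑ m ∈ Finset.range N, m * err m :=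
    Finset.sum_nonneg fun m _ => mul_nonneg (Nat.cast_nonneg m) (herr m)
  have hn0 : (0 : ℝ) < n := by exact_mod_cast hn
  by_cases hN : N ≤ n
  · calc err n ≤ C / n := h n hN
      _ ≤ (C + ∑ m ∈ Finset.range N, m * err m) / n := by gcongr; linarith
  · rw [le_div_iff₀ hn0]
    have hmem : n ∈ Finset.range N := Finset.mem_range.2 (lt_of_not_ge hN)
    have : (n : ℝ) * err n ≤ ∑ m ∈ Finset.range N, m * err m :=
      Finset.single_le_sum (f := fun m : ℕ => (m : ℝ) * err m)
        (fun m _ => mul_nonneg (Nat.cast_nonneg m) (herr m)) hmem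
    linarith [mul_comm (err n) (n : ℝ)]

lemma harmonic_sub_log_bounds {n : ℕ} (hn : 1 ≤ n) :
    Real.eulerMascheroniConstant < (harmonic n : ℝ) - Real.log n ∧
    (harmonic n : ℝ) - Real.log n ≤ Real.eulerMascheroniConstant + 1 / n := by
  have hn0 : (0 : ℝ) < n := by exact_mod_cast hn
  constructor
  · have h := Real.eulerMascheroniConstant_lt_eulerMascheroniSeq' n
    rwa [Real.eulerMascheroniSeq', if_neg (by omega : ¬ n = 0)] at h
  · have h := Real.eulerMascheroniSeq_lt_eulerMascheroniConstant n
    rw [Real.eulerMascheroniSeq] at h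
    have hlog : Real.log (n + 1) - Real.log n ≤ 1 / n := by
      rw [← Real.log_div (by positivity) (by positivity)]
      have := Real.log_le_sub_one_of_pos (x := ((n : ℝ) + 1) / n) (by positivity)
      calc Real.log (((n : ℝ) + 1) / n) ≤ ((n : ℝ) + 1) / n - 1 := this
        _ = 1 / n := by field_simp; ring
    have : (harmonic n : ℝ) - Real.log (n + 1) < Real.eulerMascheroniConstant := h
    linarith

section LogU

variable (z : ℂ)

/-- The factor of the infinite product. -/
noncomputable def ufac (k : ℕ) : ℂ := (1 + z / ((k : ℂ) + 1)) * Complex.exp (-z / ((k : ℂ) + 1))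

lemma norm_div_nat (k : ℕ) : ‖z / ((k : ℂ) + 1)‖ = ‖z‖ / ((k : ℝ) + 1) := by
  rw [norm_div]
  congr 1
  have : ((k : ℂ) + 1) = ((k + 1 : ℕ) : ℂ) := by push_cast; ring
  rw [this, Complex.norm_natCast]
  push_cast; ring

lemma log_ufac {k : ℕ} (hk : 2 * ‖z‖ ≤ (k : ℝ) + 1) :
    Complex.log (ufac z k) = Complex.log (1 + z / ((k : ℂ) + 1)) - z / ((k : ℂ) + 1) ∧
    ‖Complex.log (ufac z k)‖ ≤ ‖z‖ ^ 2 * (1 / ((k : ℝ) + 1)) ^ 2 := by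
  set w := z / ((k : ℂ) + 1) with hw_def
  have hk1 : (0 : ℝ) < (k : ℝ) + 1 := by positivity
  have hw : ‖w‖ ≤ 1 / 2 := by
    rw [hw_def, norm_div_nat]
    rw [div_le_div_iff₀ hk1 (by norm_num)]
    linarith
  have hw1 : ‖w‖ < 1 := lt_of_le_of_lt hw (by norm_num)
  have hne : 1 + w ≠ 0 := by
    intro h
    have : w = -1 := by linear_combination h
    rw [this] at hw
    simp at hw
    linarith
  set v := Complex.log (1 + w) - w with hv_def
  have hv : ‖v‖ ≤ ‖w‖ ^ 2 := by
    have h1 := Complex.norm_log_one_add_sub_self_le hw1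
    have h2 : (1 - ‖w‖)⁻¹ ≤ 2 := by
      rw [inv_le_comm₀ (by linarith) (by norm_num)]
      linarith
    calc ‖v‖ ≤ ‖w‖ ^ 2 * (1 - ‖w‖)⁻¹ / 2 := h1
      _ ≤ ‖w‖ ^ 2 * 2 / 2 := by gcongr
      _ = ‖w‖ ^ 2 := by ring
  have hexp : Complex.exp v = (1 + w) * Complex.exp (-w) := by
    rw [hv_def, sub_eq_add_neg, Complex.exp_add, Complex.exp_log hne]
  have hufac : ufac z k = Complex.exp v := by
    rw [hexp]; simp only [ufac, hw_def, neg_div]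
  have hlog : Complex.log (ufac z k) = v := by
    have him : |v.im| ≤ ‖v‖ := Complex.abs_im_le_norm v
    have hpi : (3 : ℝ) < Real.pi := Real.pi_gt_three
    have hv4 : ‖v‖ ≤ 1 / 4 := le_trans hv (by nlinarith [norm_nonneg w])
    have h1 := abs_le.1 him
    rw [hufac, Complex.log_exp (by linarith) (by linarith)]
  refine ⟨by rw [hlog], ?_⟩
  rw [hlog]
  calc ‖v‖ ≤ ‖w‖ ^ 2 := hv
    _ = ‖z‖ ^ 2 * (1 / ((k : ℝ) + 1)) ^ 2 := by
      rw [hw_def, norm_div_nat]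
      field_simp

end LogU

lemma summable_base : Summable (fun n : ℕ => (1 / ((n : ℝ) + 1)) ^ 2) := by
  have h := (Real.summable_one_div_nat_pow (p := 2)).2 one_lt_two
  have h2 := (summable_nat_add_iff 1).2 h
  refine h2.congr fun n => ?_
  push_cast
  rw [div_pow, one_pow]

lemma summable_norm_log_ufac (z : ℂ) : Summable (fun k : ℕ => ‖Complex.log (ufac z k)‖) := by
  set K := ⌈2 * ‖z‖⌉₊ with hK
  have hKz : 2 * ‖z‖ ≤ K := Nat.le_ceil _
  refine (summable_nat_add_iff K).1 ?_
  refine Summable.of_nonneg_of_le (fun n => norm_nonneg _) (fun n => ?_)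
    (((summable_nat_add_iff K).2 summable_base).mul_left (‖z‖ ^ 2))
  have hk : 2 * ‖z‖ ≤ ((n + K : ℕ) : ℝ) + 1 := by
    push_cast
    have : (0:ℝ) ≤ n := Nat.cast_nonneg n
    linarith
  exact (log_ufac z hk).2

lemma summable_log_ufac (z : ℂ) : Summable (fun k : ℕ => Complex.log (ufac z k)) :=
  (summable_norm_log_ufac z).of_norm

lemma tail_bound (z : ℂ) {n : ℕ} (hK : ⌈2 * ‖z‖⌉₊ ≤ n) (hn : 1 ≤ n) :
    ‖∑' k : ℕ, Complex.log (ufac z (k + n))‖ ≤ ‖z‖ ^ 2 / n := by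
  have hsumm : Summable (fun k : ℕ => ‖Complex.log (ufac z (k + n))‖) :=
    (summable_nat_add_iff n).2 (summable_norm_log_ufac z)
  refine le_trans (norm_tsum_le_tsum_norm hsumm) ?_
  have hn0 : (1 : ℝ) ≤ n := by exact_mod_cast hn
  refine Real.tsum_le_of_sum_range_le (fun k => norm_nonneg _) (fun m => ?_)
  set g : ℕ → ℝ := fun k => ‖z‖ ^ 2 / ((k : ℝ) + n) with hg
  have hterm : ∀ k : ℕ, ‖Complex.log (ufac z (k + n))‖ ≤ g k - g (k + 1) := by
    intro k
    set a : ℝ := (k : ℝ) + n with ha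
    have ha1 : (1 : ℝ) ≤ a := by
      have : (0:ℝ) ≤ k := Nat.cast_nonneg k
      rw [ha]; linarith
    have hk2 : 2 * ‖z‖ ≤ ((k + n : ℕ) : ℝ) + 1 := by
      have : (⌈2 * ‖z‖⌉₊ : ℝ) ≤ n := by exact_mod_cast hK
      have h2 := Nat.le_ceil (2 * ‖z‖)
      push_cast
      have : (0:ℝ) ≤ k := Nat.cast_nonneg k
      linarith
    have hb := (log_ufac z hk2).2
    have hcast : ((k + n : ℕ) : ℝ) = a := by push_cast; rfl
    rw [hcast] at hb
    refine le_trans hb ?_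
    have hsub : g k - g (k + 1) = ‖z‖ ^ 2 * (1 / a - 1 / (a + 1)) := by
      rw [hg]
      simp only
      push_cast
      rw [ha]
      field_simp
      ring
    rw [hsub]
    have h1 : (1 / (a + 1)) ^ 2 ≤ 1 / a - 1 / (a + 1) := by
      have he : 1 / a - 1 / (a + 1) = 1 / (a * (a + 1)) := by
        field_simp; ring
      rw [he, div_pow, one_pow]
      gcongr
      nlinarith
    calc ‖z‖ ^ 2 * (1 / (a + 1)) ^ 2 ≤ ‖z‖ ^ 2 * (1 / a - 1 / (a + 1)) := by
          exact mul_le_mul_of_nonneg_left h1 (sq_nonneg _)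
      _ = ‖z‖ ^ 2 * (1 / a - 1 / (a + 1)) := rfl
  calc ∑ k ∈ Finset.range m, ‖Complex.log (ufac z (k + n))‖
      ≤ ∑ k ∈ Finset.range m, (g k - g (k + 1)) := Finset.sum_le_sum fun k _ => hterm k
    _ = g 0 - g m := Finset.sum_range_sub' g m
    _ ≤ g 0 := by
        have : 0 ≤ g m := by rw [hg]; positivity
        linarith
    _ = ‖z‖ ^ 2 / n := by rw [hg]; simp

lemma prod_ufac_eq_exp {z : ℂ} (hne : ∀ k : ℕ, (1 : ℂ) + z / ((k : ℂ) + 1) ≠ 0) (n : ℕ) :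
    ∏ k ∈ Finset.range n, ufac z k =
      Complex.exp (∑ k ∈ Finset.range n, Complex.log (ufac z k)) := by
  rw [Complex.exp_sum]
  exact Finset.prod_congr rfl fun k _ =>
    (Complex.exp_log (mul_ne_zero (hne k) (Complex.exp_ne_zero _))).symm

lemma identity1 (x : ℂ) (n : ℕ) :
    (∑ σ : Equiv.Perm (Fin n), x ^ cycleCount σ) / (n.factorial : ℂ) =
      ∏ k ∈ Finset.range n, (1 + (x - 1) / ((k : ℂ) + 1)) := by
  rw [sum_pow_cycleCount]
  have hfac : ((n.factorial : ℕ) : ℂ) = ∏ k ∈ Finset.range n, ((k : ℂ) + 1) := by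
    rw [← Finset.prod_range_add_one_eq_factorial]
    push_cast
    rfl
  rw [hfac, ← Finset.prod_div_distrib]
  refine Finset.prod_congr rfl fun k _ => ?_
  have hk : ((k : ℂ) + 1) ≠ 0 := by
    have := Nat.cast_add_one_ne_zero (R := ℂ) k
    push_cast at this ⊢
    exact this
  field_simp
  ring

lemma identity2 (z : ℂ) (n : ℕ) :
    ∏ k ∈ Finset.range n, (1 + z / ((k : ℂ) + 1)) =
      (∏ k ∈ Finset.range n, ufac z k) *
        Complex.exp (z * ∑ k ∈ Finset.range n, ((k : ℂ) + 1)⁻¹) := by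
  unfold ufac
  rw [Finset.prod_mul_distrib, ← Complex.exp_sum, mul_assoc, ← Complex.exp_add]
  have h : (∑ k ∈ Finset.range n, -z / ((k : ℂ) + 1)) +
      z * ∑ k ∈ Finset.range n, ((k : ℂ) + 1)⁻¹ = 0 := by
    rw [Finset.mul_sum, ← Finset.sum_add_distrib]
    refine Finset.sum_eq_zero fun k _ => ?_
    rw [div_eq_mul_inv]
    ring
  rw [h, Complex.exp_zero, mul_one]

lemma harmonic_cast (n : ℕ) :
    ((harmonic n : ℝ) : ℂ) = ∑ k ∈ Finset.range n, ((k : ℂ) + 1)⁻¹ := by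
  rw [harmonic]
  push_cast
  rfl

lemma lhs_identity (x : ℂ) (n : ℕ) :
    ((∑ σ : Equiv.Perm (Fin n), x ^ cycleCount σ) / (n.factorial : ℂ)) *
        Complex.exp (-(x - 1) * (Real.log n : ℂ)) =
      (∏ k ∈ Finset.range n, ufac (x - 1) k) *
        Complex.exp ((x - 1) * (((harmonic n : ℝ) - Real.log n : ℝ) : ℂ)) := by
  rw [identity1, identity2, ← harmonic_cast, mul_assoc, ← Complex.exp_add]
  congr 2
  push_cast
  ring

/-- For every complex `x`, the infinite product
`Φ(x) = e^{γ(x−1)} ∏_{k≥1} (1 + (x−1)/k) e^{−(x−1)/k}` converges, and there is a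
constant `c_x` such that `|E[x^{C(σ_n)}] e^{−(x−1) log n} − Φ(x)| ≤ c_x/n` for all `n ≥ 1`:
mod-Poisson convergence of the total number of cycles at speed `log n`. -/
theorem stmt1 (x : ℂ) :
    Multipliable (fun k : ℕ =>
      (1 + (x - 1) / ((k : ℂ) + 1)) * Complex.exp (-(x - 1) / ((k : ℂ) + 1))) ∧
    ∃ c : ℝ, ∀ n : ℕ, 1 ≤ n →
      ‖((∑ σ : Equiv.Perm (Fin n), x ^ cycleCount σ) / (n.factorial : ℂ)) *
          Complex.exp (-(x - 1) * (Real.log n : ℂ)) -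
        Complex.exp ((Real.eulerMascheroniConstant : ℂ) * (x - 1)) *
          ∏' k : ℕ, (1 + (x - 1) / ((k : ℂ) + 1)) * Complex.exp (-(x - 1) / ((k : ℂ) + 1))‖
      ≤ c / n := by
  set z := x - 1 with hz
  have hfun : (fun k : ℕ => (1 + z / ((k : ℂ) + 1)) * Complex.exp (-z / ((k : ℂ) + 1)))
      = ufac z := rfl
  rw [hfun]
  by_cases h0 : ∀ k : ℕ, (1 : ℂ) + z / ((k : ℂ) + 1) ≠ 0
  · -- nondegenerate case
    have hu_ne : ∀ k, ufac z k ≠ 0 := fun k => mul_ne_zero (h0 k) (Complex.exp_ne_zero _)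
    have hmult : Multipliable (ufac z) := by
      have := Complex.multipliable_of_summable_log (summable_log_ufac z)
      exact this
    have htp : ∏' k, ufac z k = Complex.exp (∑' k, Complex.log (ufac z k)) := by
      have := Complex.cexp_tsum_eq_tprod hu_ne (summable_log_ufac z)
      exact this.symm
    refine ⟨hmult, ?_⟩
    set γ := Real.eulerMascheroniConstant with hγ
    have hγpos : 0 < γ := lt_trans (by norm_num) Real.one_half_lt_eulerMascheroniConstant
    set P := ∏' k, ufac z k with hP_def
    set G := Complex.exp ((γ : ℂ) * z) with hG_def
    set Mlog := ∑' k, ‖Complex.log (ufac z k)‖ with hMlog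
    set C1 := Real.exp Mlog * (2 * ‖z‖ ^ 2) * Real.exp (‖z‖ * (γ + 1)) with hC1
    set C2 := ‖P‖ * (‖G‖ * (2 * ‖z‖)) with hC2
    set N := max (max (⌈2 * ‖z‖⌉₊) 1) (⌈‖z‖ ^ 2⌉₊ + ⌈‖z‖⌉₊ + 1) with hN
    refine eventually_div_bound _ (fun n => norm_nonneg _) N (C1 + C2)
      (by positivity) (fun n hn => ?_)
    have hn1 : 1 ≤ n := le_trans (le_trans (le_max_right _ _) (le_max_left _ _)) hn
    have hnK : ⌈2 * ‖z‖⌉₊ ≤ n := le_trans (le_trans (le_max_left _ _) (le_max_left _ _)) hn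
    have hn0 : (0 : ℝ) < n := by exact_mod_cast hn1
    have hnz2 : ‖z‖ ^ 2 ≤ n := by
      have h1 : ⌈‖z‖ ^ 2⌉₊ ≤ n := by omega
      exact le_trans (Nat.le_ceil _) (by exact_mod_cast h1)
    have hnz : ‖z‖ ≤ n := by
      have h1 : ⌈‖z‖⌉₊ ≤ n := by omega
      exact le_trans (Nat.le_ceil _) (by exact_mod_cast h1)
    rw [lhs_identity]
    set δr : ℝ := (harmonic n : ℝ) - Real.log n with hδr
    obtain ⟨hδlow, hδhigh⟩ := harmonic_sub_log_bounds hn1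
    have hδpos : 0 < δr := lt_trans hγpos hδlow
    have h1n : 1 / (n : ℝ) ≤ 1 := by rw [div_le_one hn0]; exact_mod_cast hn1
    set Bn := ∑ k ∈ Finset.range n, Complex.log (ufac z k) with hBn_def
    set Rn := ∑' k, Complex.log (ufac z (k + n)) with hRn_def
    have hsplit : ∑' k, Complex.log (ufac z k) = Bn + Rn :=
      ((summable_log_ufac z).sum_add_tsum_nat_add n).symm
    have hAn : ∏ k ∈ Finset.range n, ufac z k = Complex.exp Bn := prod_ufac_eq_exp h0 n
    have hPeq : P = Complex.exp Bn * Complex.exp Rn := by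
      rw [htp, hsplit, Complex.exp_add]
    have hRle : ‖Rn‖ ≤ ‖z‖ ^ 2 / n := tail_bound z hnK hn1
    have hR1 : ‖Rn‖ ≤ 1 := le_trans hRle ((div_le_one hn0).2 hnz2)
    have hBnle : ‖Bn‖ ≤ Mlog :=
      le_trans (norm_sum_le _ _)
        ((summable_norm_log_ufac z).sum_le_tsum (Finset.range n) (fun k _ => norm_nonneg _))
    have hexpBn : ‖Complex.exp Bn‖ ≤ Real.exp Mlog := by
      rw [Complex.norm_exp]
      refine Real.exp_le_exp.2 (le_trans ?_ hBnle)
      exact le_trans (Complex.re_le_norm Bn) le_rfl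
    -- bound 1 : ‖∏ - P‖
    have hbound1 : ‖∏ k ∈ Finset.range n, ufac z k - P‖ ≤ Real.exp Mlog * (2 * ‖z‖ ^ 2) / n := by
      have heq : ∏ k ∈ Finset.range n, ufac z k - P
          = Complex.exp Bn * (1 - Complex.exp Rn) := by
        rw [hAn, hPeq]; ring
      rw [heq, norm_mul, norm_sub_rev]
      have h2 : ‖Complex.exp Rn - 1‖ ≤ 2 * ‖Rn‖ := by
        have := Complex.norm_exp_sub_one_le (x := Rn) hR1
        exact this
      calc ‖Complex.exp Bn‖ * ‖Complex.exp Rn - 1‖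
          ≤ Real.exp Mlog * (2 * (‖z‖ ^ 2 / n)) := by
            refine mul_le_mul hexpBn (le_trans h2 ?_) (norm_nonneg _) (Real.exp_nonneg _)
            linarith
        _ = Real.exp Mlog * (2 * ‖z‖ ^ 2) / n := by ring
    -- bound on ‖exp (z * δ)‖
    set δc : ℂ := ((δr : ℝ) : ℂ) with hδc
    have hδabs : ‖δc‖ ≤ γ + 1 := by
      rw [hδc, Complex.norm_real, Real.norm_eq_abs, abs_of_pos hδpos]
      linarith
    have hexpδ : ‖Complex.exp (z * δc)‖ ≤ Real.exp (‖z‖ * (γ + 1)) := by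
      rw [Complex.norm_exp]
      refine Real.exp_le_exp.2 ?_
      calc (z * δc).re ≤ ‖z * δc‖ := Complex.re_le_norm _
        _ = ‖z‖ * ‖δc‖ := norm_mul _ _
        _ ≤ ‖z‖ * (γ + 1) := by
            exact mul_le_mul_of_nonneg_left hδabs (norm_nonneg z)
    -- bound 2 : ‖exp(zδ) - G‖
    have hbound2 : ‖Complex.exp (z * δc) - G‖ ≤ ‖G‖ * (2 * ‖z‖) / n := by
      have hfac2 : Complex.exp (z * δc) = G * Complex.exp (z * (δc - (γ : ℂ))) := by
        rw [hG_def, ← Complex.exp_add]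
        congr 1
        ring
      have hnorm_d : ‖z * (δc - (γ : ℂ))‖ ≤ ‖z‖ / n := by
        rw [norm_mul]
        have : ‖δc - (γ : ℂ)‖ = |δr - γ| := by
          rw [hδc, ← Complex.ofReal_sub, Complex.norm_real, Real.norm_eq_abs]
        rw [this, abs_of_pos (by linarith)]
        have hle : δr - γ ≤ 1 / n := by linarith
        calc ‖z‖ * (δr - γ) ≤ ‖z‖ * (1 / n) :=
              mul_le_mul_of_nonneg_left hle (norm_nonneg z)
          _ = ‖z‖ / n := by ring
      have hd1 : ‖z * (δc - (γ : ℂ))‖ ≤ 1 :=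
        le_trans hnorm_d ((div_le_one hn0).2 hnz)
      have h2 : ‖Complex.exp (z * (δc - (γ : ℂ))) - 1‖ ≤ 2 * ‖z * (δc - (γ : ℂ))‖ := by
        have := Complex.norm_exp_sub_one_le (x := z * (δc - (γ : ℂ))) hd1
        exact this
      calc ‖Complex.exp (z * δc) - G‖ = ‖G * (Complex.exp (z * (δc - (γ : ℂ))) - 1)‖ := by
            rw [hfac2]; ring_nf
        _ = ‖G‖ * ‖Complex.exp (z * (δc - (γ : ℂ))) - 1‖ := norm_mul _ _
        _ ≤ ‖G‖ * (2 * (‖z‖ / n)) := by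
            refine mul_le_mul_of_nonneg_left (le_trans h2 ?_) (norm_nonneg _)
            linarith
        _ = ‖G‖ * (2 * ‖z‖) / n := by ring
    -- assemble
    have hsplit2 : (∏ k ∈ Finset.range n, ufac z k) * Complex.exp (z * δc) - G * P
        = (∏ k ∈ Finset.range n, ufac z k - P) * Complex.exp (z * δc)
          + P * (Complex.exp (z * δc) - G) := by ring
    calc ‖(∏ k ∈ Finset.range n, ufac z k) * Complex.exp (z * δc) - G * P‖
        ≤ ‖∏ k ∈ Finset.range n, ufac z k - P‖ * ‖Complex.exp (z * δc)‖
            + ‖P‖ * ‖Complex.exp (z * δc) - G‖ := by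
          rw [hsplit2]
          refine le_trans (norm_add_le _ _) ?_
          rw [norm_mul, norm_mul]
      _ ≤ (Real.exp Mlog * (2 * ‖z‖ ^ 2) / n) * Real.exp (‖z‖ * (γ + 1))
            + ‖P‖ * (‖G‖ * (2 * ‖z‖) / n) := by
          refine add_le_add ?_ ?_
          · exact mul_le_mul hbound1 hexpδ (norm_nonneg _) (by positivity)
          · exact mul_le_mul_of_nonneg_left hbound2 (norm_nonneg _)
      _ = (C1 + C2) / n := by rw [hC1, hC2]; ring
  · -- degenerate case
    push_neg at h0
    obtain ⟨k0, hk0⟩ := h0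
    have hu0 : ufac z k0 = 0 := by rw [ufac, hk0, zero_mul]
    have hp : HasProd (ufac z) 0 := by
      rw [HasProd]
      refine Filter.Tendsto.congr' ?_ tendsto_const_nhds
      filter_upwards [Filter.eventually_ge_atTop ({k0} : Finset ℕ)] with s hs
      exact (Finset.prod_eq_zero (hs (Finset.mem_singleton_self k0)) hu0).symm
    have htp0 : ∏' k, ufac z k = 0 := hp.tprod_eq
    refine ⟨⟨0, hp⟩, ?_⟩
    refine eventually_div_bound _ (fun n => norm_nonneg _) (k0 + 1) 0 le_rfl (fun n hn => ?_)
    have hzero : ∏ k ∈ Finset.range n, (1 + z / ((k : ℂ) + 1)) = 0 :=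
      Finset.prod_eq_zero (Finset.mem_range.2 (by omega)) hk0
    rw [identity1, hzero, htp0, zero_mul, mul_zero, sub_zero, norm_zero]
    positivity
end

section
/- Let 0 < t < 1 and let (P_k)_{k≥1} be independent random variables with P_k distributed as Po(t^k/k). Then the sum ∑_{k≥1} k·P_k is almost surely finite and has the geometric distribution Geom(t). -/
open MeasureTheory ProbabilityTheory Filter Topology Finset
open scoped ENNReal


/-- Weight of a multiset of positive naturals. -/
noncomputable def Wt (t : ℝ) (s : Multiset ℕ) : ℝ :=
  ∏ k ∈ s.toFinset, (t ^ k / (k : ℝ)) ^ (s.count k) / (s.count k).factorial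

lemma Wt_split (t : ℝ) (s : Multiset ℕ) (a : ℕ) :
    Wt t s = ((t ^ a / (a : ℝ)) ^ (s.count a) / (s.count a).factorial) *
      ∏ k ∈ s.toFinset.erase a, (t ^ k / (k : ℝ)) ^ (s.count k) / (s.count k).factorial := by
  by_cases h : a ∈ s.toFinset
  · rw [Wt, ← Finset.mul_prod_erase _ _ h]
  · rw [Finset.erase_eq_of_notMem h, Wt]
    have : s.count a = 0 := by
      simpa [Multiset.count_eq_zero] using fun hh => h (Multiset.mem_toFinset.2 hh)
    simp [this]

lemma Wt_cons (t : ℝ) (s : Multiset ℕ) (a : ℕ) :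
    Wt t (a ::ₘ s) * (s.count a + 1 : ℝ) = (t ^ a / (a : ℝ)) * Wt t s := by
  have h1 := Wt_split t (a ::ₘ s) a
  have h2 := Wt_split t s a
  have htf : (a ::ₘ s).toFinset.erase a = s.toFinset.erase a := by
    rw [Multiset.toFinset_cons, Finset.erase_insert_eq_erase]
  have hprod : ∏ k ∈ (a ::ₘ s).toFinset.erase a,
      (t ^ k / (k : ℝ)) ^ ((a ::ₘ s).count k) / ((a ::ₘ s).count k).factorial
      = ∏ k ∈ s.toFinset.erase a,
        (t ^ k / (k : ℝ)) ^ (s.count k) / (s.count k).factorial := by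
    rw [htf]
    refine Finset.prod_congr rfl fun k hk => ?_
    rw [Multiset.count_cons_of_ne (Finset.ne_of_mem_erase hk) _]
  rw [h1, h2, hprod, Multiset.count_cons_self]
  set Q := ∏ k ∈ s.toFinset.erase a,
    (t ^ k / (k : ℝ)) ^ (s.count k) / (s.count k).factorial
  set c := s.count a
  set l := t ^ a / (a : ℝ)
  have hfac : ((c + 1).factorial : ℝ) = (c + 1) * c.factorial := by
    rw [Nat.factorial_succ]; push_cast; ring
  have hc : (c.factorial : ℝ) ≠ 0 := Nat.cast_ne_zero.2 c.factorial_ne_zero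
  have hc2 : ((c : ℝ) + 1) ≠ 0 := by positivity
  rw [hfac, pow_succ]
  field_simp

lemma parts_le {m : ℕ} (q : Nat.Partition m) {k : ℕ} (hk : k ∈ q.parts) : k ≤ m := by
  rw [← q.parts_sum]
  exact Multiset.single_le_sum (fun x _ => Nat.zero_le x) _ hk

lemma parts_toFinset_subset {m : ℕ} (q : Nat.Partition m) :
    q.parts.toFinset ⊆ Finset.Icc 1 m := by
  intro k hk
  rw [Multiset.mem_toFinset] at hk
  exact Finset.mem_Icc.2 ⟨q.parts_pos hk, parts_le q hk⟩

lemma Icc_eq_map_range (m : ℕ) :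
    Finset.Icc 1 m = (Finset.range m).map ⟨Nat.succ, Nat.succ_injective⟩ := by
  ext k
  simp only [Finset.mem_Icc, Finset.mem_map, Finset.mem_range, Function.Embedding.coeFn_mk,
    Nat.succ_eq_add_one]
  constructor
  · rintro ⟨h1, h2⟩; exact ⟨k - 1, by omega, by omega⟩
  · rintro ⟨a, ha, rfl⟩; omega

lemma count_mul_sum_toFinset (s : Multiset ℕ) :
    ∑ k ∈ s.toFinset, s.count k * k = s.sum := by
  have h := Finset.sum_multiset_map_count s (id : ℕ → ℕ)
  simpa [smul_eq_mul] using h.symm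

lemma sum_count_mul {m : ℕ} (q : Nat.Partition m) :
    ∑ k ∈ Finset.Icc 1 m, q.parts.count k * k = m := by
  have h2 : ∑ k ∈ Finset.Icc 1 m, q.parts.count k * k
      = ∑ k ∈ q.parts.toFinset, q.parts.count k * k := by
    refine (Finset.sum_subset (parts_toFinset_subset q) fun k _ hk => ?_).symm
    have : q.parts.count k = 0 := by
      rw [Multiset.count_eq_zero]
      exact fun hh => hk (Multiset.mem_toFinset.2 hh)
    simp [this]
  rw [h2, count_mul_sum_toFinset, q.parts_sum]

theorem Wt_sum (t : ℝ) : ∀ m : ℕ, (∑ q : Nat.Partition m, Wt t q.parts) = t ^ m := by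
  intro m
  induction m using Nat.strong_induction_on with
  | _ m ih =>
    rcases Nat.eq_zero_or_pos m with hm | hm
    · subst hm
      rw [Finset.sum_eq_single_of_mem (default : Nat.Partition 0) (Finset.mem_univ _)
        (fun q _ hq => absurd (Subsingleton.elim q default) hq)]
      have : (default : Nat.Partition 0).parts = 0 := by
        have h := (default : Nat.Partition 0).parts_sum
        by_contra hne
        obtain ⟨a, ha⟩ := Multiset.exists_mem_of_ne_zero hne
        have := (default : Nat.Partition 0).parts_pos ha
        have hle := Multiset.single_le_sum (fun (x : ℕ) _ => Nat.zero_le x) _ ha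
        omega
      simp [this, Wt]
    · have key : ∀ k ∈ Finset.Icc 1 m,
          t ^ k * t ^ (m - k) = ∑ q : Nat.Partition m,
            ((q.parts.count k * k : ℕ) : ℝ) * Wt t q.parts := by
        intro k hk
        rw [Finset.mem_Icc] at hk
        have hklt : m - k < m := by omega
        have hbij : (∑ p : Nat.Partition (m - k), t ^ k * Wt t p.parts)
            = ∑ q ∈ Finset.univ.filter (fun q : Nat.Partition m => k ∈ q.parts),
              ((q.parts.count k * k : ℕ) : ℝ) * Wt t q.parts := by
          refine Finset.sum_bij'
            (i := fun (p : Nat.Partition (m - k)) (_ : p ∈ Finset.univ) =>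
              (⟨k ::ₘ p.parts,
                fun {i} hi => by
                  rcases Multiset.mem_cons.1 hi with h | h
                  · omega
                  · exact p.parts_pos h,
                by rw [Multiset.sum_cons, p.parts_sum]; omega⟩ : Nat.Partition m))
            (j := fun (q : Nat.Partition m)
                (hq : q ∈ Finset.univ.filter (fun q : Nat.Partition m => k ∈ q.parts)) =>
              (⟨q.parts.erase k,
                fun {i} hi => q.parts_pos (Multiset.mem_of_mem_erase hi),
                by
                  have hkq : k ∈ q.parts := (Finset.mem_filter.1 hq).2
                  have := congrArg Multiset.sum (Multiset.cons_erase hkq)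
                  rw [Multiset.sum_cons, q.parts_sum] at this
                  omega⟩ : Nat.Partition (m - k)))
            ?_ ?_ ?_ ?_ ?_
          · intro p _
            simp [Multiset.mem_cons_self]
          · intro q hq
            exact Finset.mem_univ _
          · intro p _
            ext : 1
            simp [Multiset.erase_cons_head]
          · intro q hq
            ext : 1
            exact Multiset.cons_erase (Finset.mem_filter.1 hq).2
          · intro p _
            have hc := Wt_cons t p.parts k
            have hk0 : (k : ℝ) ≠ 0 := Nat.cast_ne_zero.2 (by omega)
            simp only [Multiset.count_cons_self]
            push_cast
            have : (t ^ k / (k : ℝ)) * Wt t p.parts * (k : ℝ) = t ^ k * Wt t p.parts := by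
              field_simp
            rw [← this, ← hc]
            ring
        have hfilter : (∑ q ∈ Finset.univ.filter (fun q : Nat.Partition m => k ∈ q.parts),
              ((q.parts.count k * k : ℕ) : ℝ) * Wt t q.parts)
            = ∑ q : Nat.Partition m, ((q.parts.count k * k : ℕ) : ℝ) * Wt t q.parts := by
          refine Finset.sum_subset (Finset.subset_univ _) fun q _ hq => ?_
          rw [Finset.mem_filter, not_and] at hq
          have : q.parts.count k = 0 := by
            rw [Multiset.count_eq_zero]
            exact hq (Finset.mem_univ q)
          simp [this]
        rw [← hfilter, ← hbij, ← Finset.mul_sum, ih (m - k) hklt]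
      -- sum over k
      have hsum : ∑ k ∈ Finset.Icc 1 m, t ^ k * t ^ (m - k)
          = (m : ℝ) * ∑ q : Nat.Partition m, Wt t q.parts := by
        rw [Finset.sum_congr rfl key, Finset.sum_comm]
        rw [Finset.mul_sum]
        refine Finset.sum_congr rfl fun q _ => ?_
        rw [← Finset.sum_mul]
        congr 1
        rw [← Nat.cast_sum]
        rw [Finset.sum_congr rfl (fun k _ => rfl)]
        norm_cast
        exact sum_count_mul q
      have hsum2 : ∑ k ∈ Finset.Icc 1 m, t ^ k * t ^ (m - k) = (m : ℝ) * t ^ m := by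
        have hc : ∀ k ∈ Finset.Icc 1 m, t ^ k * t ^ (m - k) = t ^ m := by
          intro k hk
          rw [Finset.mem_Icc] at hk
          rw [← pow_add]
          congr 1
          omega
        rw [Finset.sum_congr rfl hc, Finset.sum_const, Nat.card_Icc]
        simp [nsmul_eq_mul]
      have hmne : (m : ℝ) ≠ 0 := Nat.cast_ne_zero.2 (by omega)
      have := hsum.symm.trans hsum2
      exact mul_left_cancel₀ hmne this

lemma count_zero_of_gt {m : ℕ} (q : Nat.Partition m) {k : ℕ} (h : m < k) :
    q.parts.count k = 0 := by
  rw [Multiset.count_eq_zero]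
  intro hmem
  exact absurd (parts_le q hmem) (by omega)


/-- rate of the `j`-th Poisson variable -/
noncomputable def lamf (t : ℝ) (j : ℕ) : ℝ := t ^ (j + 1) / ((j : ℝ) + 1)

/-- Poisson point mass -/
noncomputable def pois (t : ℝ) (j c : ℕ) : ℝ :=
  Real.exp (-(lamf t j)) * (lamf t j) ^ c / c.factorial

lemma lamf_nonneg {t : ℝ} (ht : 0 < t) (j : ℕ) : 0 ≤ lamf t j := by
  unfold lamf; positivity

lemma pois_nonneg {t : ℝ} (ht : 0 < t) (j c : ℕ) : 0 ≤ pois t j c := by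
  have := lamf_nonneg ht j
  unfold pois
  positivity

lemma event_eq {Ω : Type*} (P : ℕ → Ω → ℕ) (m : ℕ) :
    {ω | (∑' j : ℕ, (((j + 1) * P j ω : ℕ) : ℝ≥0∞)) = (m : ℝ≥0∞)} =
    ⋃ q : Nat.Partition m, ⋂ j : ℕ, {ω | P j ω = q.parts.count (j + 1)} := by
  classical
  ext ω
  simp only [Set.mem_setOf_eq, Set.mem_iUnion, Set.mem_iInter]
  constructor
  · intro h
    have hle : ∀ j, (j + 1) * P j ω ≤ m := by
      intro j
      have h1 : (((j + 1) * P j ω : ℕ) : ℝ≥0∞) ≤ (m : ℝ≥0∞) := h ▸ ENNReal.le_tsum j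
      exact_mod_cast h1
    have hzero : ∀ j, m ≤ j → P j ω = 0 := by
      intro j hj
      by_contra h0
      have hp : 0 < P j ω := Nat.pos_of_ne_zero h0
      have h2 : j + 1 ≤ (j + 1) * P j ω := Nat.le_mul_of_pos_right _ hp
      have := hle j
      omega
    have htsum : (∑' j : ℕ, (((j + 1) * P j ω : ℕ) : ℝ≥0∞))
        = ((∑ j ∈ Finset.range m, (j + 1) * P j ω : ℕ) : ℝ≥0∞) := by
      rw [Nat.cast_sum]
      refine tsum_eq_sum fun j hj => ?_
      rw [Finset.mem_range, not_lt] at hj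
      rw [hzero j hj]
      simp
    have hs : ∑ j ∈ Finset.range m, (j + 1) * P j ω = m := by
      have := htsum.symm.trans h
      exact_mod_cast this
    refine ⟨⟨∑ j ∈ Finset.range m, Multiset.replicate (P j ω) (j + 1), ?_, ?_⟩, ?_⟩
    · intro i hi
      rw [Multiset.mem_sum] at hi
      obtain ⟨j, _, hj⟩ := hi
      rw [Multiset.eq_of_mem_replicate hj]
      omega
    · have hmap : (∑ j ∈ Finset.range m, Multiset.replicate (P j ω) (j + 1)).sum
          = ∑ j ∈ Finset.range m, (Multiset.replicate (P j ω) (j + 1)).sum := by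
        rw [← Multiset.coe_sumAddMonoidHom, map_sum]
      rw [hmap]
      simp only [Multiset.sum_replicate, smul_eq_mul]
      conv_rhs => rw [← hs]
      exact Finset.sum_congr rfl fun j _ => mul_comm _ _
    · intro j
      rw [Multiset.count_sum']
      simp only [Multiset.count_replicate, add_left_inj]
      rw [Finset.sum_ite_eq' (Finset.range m) j (fun i => P i ω)]
      by_cases hjm : j < m
      · simp [hjm]
      · simp only [Finset.mem_range, hjm, if_false]
        exact hzero j (by omega)
  · rintro ⟨q, hq⟩
    have hcount0 : ∀ j, m ≤ j → q.parts.count (j + 1) = 0 := fun j hj =>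
      count_zero_of_gt q (by omega)
    have htsum : (∑' j : ℕ, (((j + 1) * P j ω : ℕ) : ℝ≥0∞))
        = ((∑ j ∈ Finset.range m, (j + 1) * P j ω : ℕ) : ℝ≥0∞) := by
      rw [Nat.cast_sum]
      refine tsum_eq_sum fun j hj => ?_
      rw [Finset.mem_range, not_lt] at hj
      rw [hq j, hcount0 j hj]
      simp
    rw [htsum, Nat.cast_inj]
    have h1 : ∑ j ∈ Finset.range m, (j + 1) * P j ω
        = ∑ j ∈ Finset.range m, (j + 1) * q.parts.count (j + 1) :=
      Finset.sum_congr rfl fun j _ => by rw [hq j]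
    have h2 : ∑ j ∈ Finset.range m, (j + 1) * q.parts.count (j + 1)
        = ∑ k ∈ Finset.Icc 1 m, k * q.parts.count k := by
      rw [Icc_eq_map_range, Finset.sum_map]
      rfl
    rw [h1, h2, Finset.sum_congr rfl fun k _ => mul_comm _ _, sum_count_mul]

lemma lamf_hasSum {t : ℝ} (ht : 0 < t) (ht1 : t < 1) :
    HasSum (lamf t) (-Real.log (1 - t)) := by
  have h := Real.hasSum_pow_div_log_of_abs_lt_one (x := t) (abs_lt.2 ⟨by linarith, ht1⟩)
  exact h

lemma atom_meas {Ω : Type*} [MeasurableSpace Ω] (μ : Measure Ω) [IsProbabilityMeasure μ]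
    (t : ℝ) (ht : 0 < t) (ht1 : t < 1) (P : ℕ → Ω → ℕ)
    (hmeas : ∀ j, Measurable (P j))
    (hindep : iIndepFun P μ)
    (hdist : ∀ j m : ℕ, μ {ω | P j ω = m} = ENNReal.ofReal (pois t j m))
    (m : ℕ) (q : Nat.Partition m) :
    μ (⋂ j : ℕ, {ω | P j ω = q.parts.count (j + 1)}) =
      ENNReal.ofReal ((1 - t) * ∏ j ∈ Finset.range m,
        (lamf t j) ^ (q.parts.count (j + 1)) / (q.parts.count (j + 1)).factorial) := by
  classical
  set c : ℕ → ℕ := fun j => q.parts.count (j + 1) with hc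
  set C : ℝ := ∏ j ∈ Finset.range m, (lamf t j) ^ (c j) / (c j).factorial with hC
  set sn : ℕ → Set Ω := fun n => ⋂ j ∈ Finset.range n, {ω | P j ω = c j} with hsn
  have hE : ∀ j k, MeasurableSet {ω | P j ω = k} := fun j k =>
    hmeas j (measurableSet_singleton k)
  have hsmeas : ∀ n, MeasurableSet (sn n) := fun n =>
    MeasurableSet.biInter (Finset.range n).countable_toSet (fun j _ => hE j (c j))
  have hanti : Antitone sn := by
    intro n n' h ω hω
    simp only [hsn, Set.mem_iInter] at hω ⊢
    intro j hj
    exact hω j (Finset.mem_range.2 (lt_of_lt_of_le (Finset.mem_range.1 hj) h))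
  have hInt : (⋂ n, sn n) = ⋂ j, {ω | P j ω = c j} := by
    ext ω
    simp only [hsn, Set.mem_iInter]
    constructor
    · intro h j
      exact h (j + 1) j (Finset.self_mem_range_succ j)
    · intro h n j _
      exact h j
  have h1 : Tendsto (fun n => μ (sn n)) atTop (𝓝 (μ (⋂ j, {ω | P j ω = c j}))) := by
    rw [← hInt]
    exact tendsto_measure_iInter_atTop (fun n => (hsmeas n).nullMeasurableSet) hanti
      ⟨0, measure_ne_top μ _⟩
  have hμn : ∀ n, μ (sn n) = ENNReal.ofReal (∏ j ∈ Finset.range n, pois t j (c j)) := by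
    intro n
    rw [hsn]
    rw [hindep.meas_biInter (S := Finset.range n) (s := fun i => {ω | P i ω = c i})
      (fun i _ => ⟨{c i}, measurableSet_singleton _, rfl⟩)]
    rw [Finset.prod_congr rfl fun j _ => hdist j (c j)]
    rw [← ENNReal.ofReal_prod_of_nonneg (fun j _ => pois_nonneg ht j (c j))]
  -- real-valued limit
  have hexp_tend : Tendsto (fun n => Real.exp (-(∑ j ∈ Finset.range n, lamf t j))) atTop
      (𝓝 (1 - t)) := by
    have hsum := (lamf_hasSum ht ht1).tendsto_sum_nat
    have h2 := (Real.continuous_exp.tendsto _).comp hsum.neg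
    rw [neg_neg, Real.exp_log (by linarith)] at h2
    exact h2.congr fun n => rfl
  have hconst : ∀ n, m ≤ n →
      (∏ j ∈ Finset.range n, (lamf t j) ^ (c j) / (c j).factorial) = C := by
    intro n hn
    rw [hC]
    refine (Finset.prod_subset (Finset.range_subset_range.2 hn) fun j _ hj => ?_).symm
    rw [Finset.mem_range, not_lt] at hj
    have : c j = 0 := count_zero_of_gt q (by omega)
    simp [this]
  have htail : Tendsto (fun n => ∏ j ∈ Finset.range n, (lamf t j) ^ (c j) / (c j).factorial)
      atTop (𝓝 C) := by
    refine Tendsto.congr' ?_ (tendsto_const_nhds (x := C))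
    filter_upwards [eventually_ge_atTop m] with n hn
    exact (hconst n hn).symm
  have heq : ∀ n, ∏ j ∈ Finset.range n, pois t j (c j)
      = Real.exp (-(∑ j ∈ Finset.range n, lamf t j)) *
        ∏ j ∈ Finset.range n, (lamf t j) ^ (c j) / (c j).factorial := by
    intro n
    calc ∏ j ∈ Finset.range n, pois t j (c j)
        = ∏ j ∈ Finset.range n,
            (Real.exp (-(lamf t j)) * ((lamf t j) ^ (c j) / (c j).factorial)) := by
          refine Finset.prod_congr rfl fun j _ => ?_
          rw [pois, mul_div_assoc]
      _ = (∏ j ∈ Finset.range n, Real.exp (-(lamf t j))) *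
            ∏ j ∈ Finset.range n, (lamf t j) ^ (c j) / (c j).factorial :=
          Finset.prod_mul_distrib
      _ = Real.exp (-(∑ j ∈ Finset.range n, lamf t j)) *
            ∏ j ∈ Finset.range n, (lamf t j) ^ (c j) / (c j).factorial := by
          rw [← Real.exp_sum]
          congr 1
          rw [Finset.sum_neg_distrib]
  have hprod_tend : Tendsto (fun n => ∏ j ∈ Finset.range n, pois t j (c j)) atTop
      (𝓝 ((1 - t) * C)) :=
    (hexp_tend.mul htail).congr fun n => (heq n).symm
  exact tendsto_nhds_unique h1 (by
    refine Tendsto.congr (fun n => (hμn n).symm) ?_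
    exact (ENNReal.continuous_ofReal.tendsto _).comp hprod_tend)

lemma prod_range_eq_Wt (t : ℝ) {m : ℕ} (q : Nat.Partition m) :
    (∏ j ∈ Finset.range m, (lamf t j) ^ (q.parts.count (j + 1)) /
      (q.parts.count (j + 1)).factorial) = Wt t q.parts := by
  have h1 : (∏ j ∈ Finset.range m, (lamf t j) ^ (q.parts.count (j + 1)) /
        (q.parts.count (j + 1)).factorial)
      = ∏ k ∈ Finset.Icc 1 m,
          (t ^ k / (k : ℝ)) ^ (q.parts.count k) / (q.parts.count k).factorial := by
    rw [Icc_eq_map_range, Finset.prod_map]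
    refine Finset.prod_congr rfl fun j _ => ?_
    simp only [Function.Embedding.coeFn_mk, Nat.succ_eq_add_one, lamf]
    push_cast
    ring
  rw [h1, Wt]
  refine (Finset.prod_subset (parts_toFinset_subset q) fun k _ hk => ?_).symm
  have : q.parts.count k = 0 := by
    rw [Multiset.count_eq_zero]
    exact fun hh => hk (Multiset.mem_toFinset.2 hh)
  simp [this]

/-- If `(P_k)_{k≥1}` are independent random variables with `P_k ∼ Po(t^k/k)` for
`0 < t < 1` (here indexed by `k = j+1` for `j : ℕ`), then `∑_{k≥1} k·P_k` is almost
surely finite and has the geometric distribution `Geom(t)`,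
i.e. `P(∑ k P_k = m) = (1−t)t^m` for all `m`. -/
theorem stmt4 {Ω : Type*} [MeasurableSpace Ω] (μ : Measure Ω) [IsProbabilityMeasure μ]
    (t : ℝ) (ht : 0 < t) (ht1 : t < 1) (P : ℕ → Ω → ℕ)
    (hmeas : ∀ j, Measurable (P j))
    (hindep : iIndepFun P μ)
    (hdist : ∀ j m : ℕ, μ {ω | P j ω = m} =
      ENNReal.ofReal (Real.exp (-(t ^ (j + 1) / ((j : ℝ) + 1))) *
        (t ^ (j + 1) / ((j : ℝ) + 1)) ^ m / (m.factorial : ℝ))) :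
    μ {ω | (∑' j : ℕ, (((j + 1) * P j ω : ℕ) : ℝ≥0∞)) < ⊤} = 1 ∧
    ∀ m : ℕ, μ {ω | (∑' j : ℕ, (((j + 1) * P j ω : ℕ) : ℝ≥0∞)) = (m : ℝ≥0∞)}
      = ENNReal.ofReal ((1 - t) * t ^ m) := by
  have hdist' : ∀ j k : ℕ, μ {ω | P j ω = k} = ENNReal.ofReal (pois t j k) := hdist
  have hE : ∀ j k, MeasurableSet {ω | P j ω = k} := fun j k =>
    hmeas j (measurableSet_singleton k)
  have hBmeas : ∀ (m : ℕ) (q : Nat.Partition m),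
      MeasurableSet (⋂ j : ℕ, {ω | P j ω = q.parts.count (j + 1)}) := fun m q =>
    MeasurableSet.iInter fun j => hE _ _
  have hdisj : ∀ m : ℕ, Pairwise (Function.onFun Disjoint
      fun q : Nat.Partition m => ⋂ j : ℕ, {ω | P j ω = q.parts.count (j + 1)}) := by
    intro m q q' hne
    refine Set.disjoint_left.2 fun ω hq hq' => hne ?_
    simp only [Set.mem_iInter, Set.mem_setOf_eq] at hq hq'
    ext : 1
    rw [Multiset.ext]
    intro a
    match a with
    | 0 =>
      rw [Multiset.count_eq_zero_of_notMem (fun h => Nat.lt_irrefl 0 (q.parts_pos h)),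
        Multiset.count_eq_zero_of_notMem (fun h => Nat.lt_irrefl 0 (q'.parts_pos h))]
    | j + 1 => rw [← hq j, ← hq' j]
  have key : ∀ m : ℕ, μ {ω | (∑' j : ℕ, (((j + 1) * P j ω : ℕ) : ℝ≥0∞)) = (m : ℝ≥0∞)}
      = ENNReal.ofReal ((1 - t) * t ^ m) := by
    intro m
    rw [event_eq P m]
    rw [measure_iUnion (hdisj m) (fun q => hBmeas m q)]
    rw [tsum_fintype]
    rw [Finset.sum_congr rfl fun q _ => atom_meas μ t ht ht1 P hmeas hindep hdist' m q]
    rw [← ENNReal.ofReal_sum_of_nonneg (fun q _ => by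
      refine mul_nonneg (by linarith) (Finset.prod_nonneg fun j _ => ?_)
      have := lamf_nonneg ht j
      positivity)]
    congr 1
    rw [← Finset.mul_sum]
    congr 1
    rw [Finset.sum_congr rfl fun q _ => prod_range_eq_Wt t q]
    exact Wt_sum t m
  refine ⟨?_, key⟩
  have hmeasSm : ∀ m : ℕ,
      MeasurableSet {ω | (∑' j : ℕ, (((j + 1) * P j ω : ℕ) : ℝ≥0∞)) = (m : ℝ≥0∞)} := by
    intro m
    rw [event_eq P m]
    exact MeasurableSet.iUnion fun q => hBmeas m q
  have hdisjm : Pairwise (Function.onFun Disjoint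
      fun m : ℕ => {ω | (∑' j : ℕ, (((j + 1) * P j ω : ℕ) : ℝ≥0∞)) = (m : ℝ≥0∞)}) := by
    intro m m' hne
    refine Set.disjoint_left.2 fun ω hm hm' => hne ?_
    rw [Set.mem_setOf_eq] at hm hm'
    have : (m : ℝ≥0∞) = (m' : ℝ≥0∞) := hm ▸ hm'
    exact_mod_cast this
  have hsub : (⋃ m : ℕ, {ω | (∑' j : ℕ, (((j + 1) * P j ω : ℕ) : ℝ≥0∞)) = (m : ℝ≥0∞)})
      ⊆ {ω | (∑' j : ℕ, (((j + 1) * P j ω : ℕ) : ℝ≥0∞)) < ⊤} := by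
    refine Set.iUnion_subset fun m ω hm => ?_
    rw [Set.mem_setOf_eq] at hm ⊢
    rw [hm]
    exact ENNReal.natCast_lt_top m
  have hgeo : (∑' m : ℕ, ENNReal.ofReal ((1 - t) * t ^ m)) = 1 := by
    rw [← ENNReal.ofReal_tsum_of_nonneg
      (fun m => mul_nonneg (by linarith) (pow_nonneg ht.le m))
      ((summable_geometric_of_lt_one ht.le ht1).mul_left _)]
    rw [tsum_mul_left, tsum_geometric_of_lt_one ht.le ht1,
      mul_inv_cancel₀ (by linarith : (1 : ℝ) - t ≠ 0)]
    exact ENNReal.ofReal_one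
  have hge : (1 : ℝ≥0∞) ≤ μ {ω | (∑' j : ℕ, (((j + 1) * P j ω : ℕ) : ℝ≥0∞)) < ⊤} := by
    calc (1 : ℝ≥0∞) = ∑' m : ℕ, ENNReal.ofReal ((1 - t) * t ^ m) := hgeo.symm
      _ = ∑' m : ℕ, μ {ω | (∑' j : ℕ, (((j + 1) * P j ω : ℕ) : ℝ≥0∞)) = (m : ℝ≥0∞)} :=
          tsum_congr fun m => (key m).symm
      _ = μ (⋃ m : ℕ, {ω | (∑' j : ℕ, (((j + 1) * P j ω : ℕ) : ℝ≥0∞)) = (m : ℝ≥0∞)}) :=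
          (measure_iUnion hdisjm hmeasSm).symm
      _ ≤ _ := measure_mono hsub
  exact le_antisymm (prob_le_one) hge
end

section
/- (Khintchin) Let α > 1 and let Z_α be a random variable with the Zeta distribution ζ(α). Then the family of p-adic valuations (v_p(Z_α))_{p prime} is a family of independent random variables, and for each prime p, v_p(Z_α) has the geometric distribution Geom(p^{−α}). Equivalently, Z_α has the same law as ∏_{p prime} p^{G_p} where the G_p ∼ Geom(p^{−α}) are independent. -/
open MeasureTheory ProbabilityTheory

/-- `zetaR α = ∑_{n≥1} n^{−α}`, the Riemann zeta function for real `α > 1`. -/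
noncomputable def zetaR (α : ℝ) : ℝ := ∑' n : ℕ, ((n : ℝ) + 1) ^ (-α)

lemma natMS_eq_generateFrom_singletons :
    (inferInstance : MeasurableSpace ℕ)
      = MeasurableSpace.generateFrom (Set.range fun n : ℕ => ({n} : Set ℕ)) := by
  refine le_antisymm ?_ ?_
  · intro s _
    have hs : s = ⋃ x ∈ s, {x} := by ext; simp
    rw [hs]
    exact MeasurableSet.biUnion s.to_countable
      (fun x _ => MeasurableSpace.measurableSet_generateFrom ⟨x, rfl⟩)
  · exact le_top

lemma prod_primes_pow_dvd (m : Nat.Primes → ℕ) (k : ℕ) :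
    ∀ S : Finset Nat.Primes, (∀ p ∈ S, ((p : ℕ)) ^ m p ∣ k) →
      (∏ p ∈ S, (p : ℕ) ^ m p) ∣ k := by
  intro S
  induction S using Finset.induction_on with
  | empty => intro _; simpa using one_dvd k
  | @insert q S hq ih =>
    intro h
    rw [Finset.prod_insert hq]
    refine Nat.Coprime.mul_dvd_of_dvd_of_dvd ?_ (h q (Finset.mem_insert_self _ _))
      (ih fun p hp => h p (Finset.mem_insert_of_mem hp))
    refine Nat.coprime_prod_right_iff.mpr fun p hp => ?_
    exact Nat.Coprime.pow _ _ ((Nat.coprime_primes q.2 p.2).mpr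
      (fun hqp => hq (by rw [show q = p from Subtype.coe_injective hqp]; exact hp)))

/-- (Khintchin) If `Z_α` has the Zeta distribution of parameter `α > 1`, i.e.
`P(Z_α = k) = 1/(ζ(α) k^α)` for `k ≥ 1`, then the `p`-adic valuations
`(v_p(Z_α))_{p prime}` are independent, and `v_p(Z_α) ∼ Geom(p^{−α})`. -/
theorem stmt6 {Ω : Type*} [MeasurableSpace Ω] (μ : Measure Ω) [IsProbabilityMeasure μ]
    (α : ℝ) (hα : 1 < α) (Z : Ω → ℕ) (hZ : Measurable Z)
    (hdist : ∀ k : ℕ, 1 ≤ k →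
      μ {ω | Z ω = k} = ENNReal.ofReal (1 / (zetaR α * (k : ℝ) ^ α))) :
    iIndepFun
      (fun (p : Nat.Primes) ω => padicValNat p (Z ω)) μ ∧
    ∀ (p : Nat.Primes) (m : ℕ),
      μ {ω | padicValNat p (Z ω) = m}
        = ENNReal.ofReal ((1 - ((p : ℕ) : ℝ) ^ (-α)) * (((p : ℕ) : ℝ) ^ (-α)) ^ m) := by
  classical
  have hα0 : (0:ℝ) < α := lt_trans one_pos hα
  have hsum : Summable (fun n : ℕ => ((n : ℝ) + 1) ^ (-α)) := by
    have h1 : Summable (fun n : ℕ => ((n : ℝ) ^ α)⁻¹) := Real.summable_nat_rpow_inv.mpr hα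
    have h2 := (summable_nat_add_iff 1).mpr h1
    refine h2.congr fun n => ?_
    push_cast
    rw [Real.rpow_neg (by positivity)]
  have hzpos : 0 < zetaR α := by
    refine Summable.tsum_pos hsum (fun n => Real.rpow_nonneg (by positivity) _) 0 ?_
    positivity
  set c := zetaR α with hc
  have hc0 : c ≠ 0 := ne_of_gt hzpos
  have hpre : ∀ A : Set ℕ, μ (Z ⁻¹' A) = ∑' k : A, μ {ω | Z ω = k} := by
    intro A
    have hA : Z ⁻¹' A = ⋃ k ∈ A, Z ⁻¹' {k} := by ext ω; simp
    rw [hA, measure_biUnion A.to_countable ?_ (fun k _ => hZ (measurableSet_singleton k))]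
    · rfl
    · intro i _ j _ hij
      exact Disjoint.preimage Z (Set.disjoint_singleton.mpr hij)
  have hterm : ∀ k : ℕ, μ {ω | Z ω = k + 1}
      = ENNReal.ofReal (1 / (c * ((k:ℝ) + 1) ^ α)) := by
    intro k
    rw [hdist (k+1) (by omega)]
    congr 2
    push_cast
    ring_nf
  have hsum' : Summable (fun k : ℕ => 1 / (c * ((k:ℝ) + 1) ^ α)) := by
    have := hsum.mul_left c⁻¹
    refine this.congr fun n => ?_
    rw [Real.rpow_neg (by positivity)]
    field_simp
  have htail : ∑' k : ℕ, μ {ω | Z ω = k + 1} = 1 := by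
    calc ∑' k : ℕ, μ {ω | Z ω = k+1}
        = ENNReal.ofReal (∑' k : ℕ, 1 / (c * ((k:ℝ)+1) ^ α)) := by
          rw [tsum_congr fun k => hterm k]
          exact (ENNReal.ofReal_tsum_of_nonneg (fun n => by positivity) hsum').symm
      _ = 1 := by
          have heq : (fun k : ℕ => 1 / (c * ((k:ℝ)+1) ^ α))
              = fun k : ℕ => c⁻¹ * (((k:ℝ)+1) ^ (-α)) := by
            funext k
            rw [Real.rpow_neg (by positivity)]
            field_simp
          rw [heq, tsum_mul_left,
            show ∑' k : ℕ, ((k:ℝ)+1) ^ (-α) = c from hc.symm,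
            inv_mul_cancel₀ hc0, ENNReal.ofReal_one]
  have hZ0 : μ {ω | Z ω = 0} = 0 := by
    have h1 : μ (Z ⁻¹' Set.univ) = 1 := by rw [Set.preimage_univ]; exact measure_univ
    rw [hpre] at h1
    rw [tsum_univ (fun k => μ {ω | Z ω = k})] at h1
    rw [tsum_eq_zero_add' ENNReal.summable] at h1
    rw [htail] at h1
    have h2 : (1:ENNReal) + μ {ω | Z ω = 0} = 1 + 0 := by rw [add_comm, h1, add_zero]
    exact (ENNReal.add_right_inj ENNReal.one_ne_top).mp h2
  have hscale : ∀ (N : ℕ), 0 < N → ∀ B : Set ℕ, 0 ∉ B →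
      μ (Z ⁻¹' ((fun k => N * k) '' B))
        = ENNReal.ofReal ((N:ℝ) ^ (-α)) * μ (Z ⁻¹' B) := by
    intro N hN B hB
    rw [hpre, hpre, tsum_image (g := fun k : ℕ => N * k) (s := B)
        (fun n : ℕ => μ {ω | Z ω = n}) ((mul_right_injective₀ hN.ne').injOn),
      ← ENNReal.tsum_mul_left]
    refine tsum_congr fun k => ?_
    have hk : (k:ℕ) ≠ 0 := fun h => hB (h ▸ k.2)
    have hk1 : 1 ≤ (k:ℕ) := Nat.one_le_iff_ne_zero.mpr hk
    have hNk : 1 ≤ N * (k:ℕ) := Nat.one_le_iff_ne_zero.mpr (Nat.mul_ne_zero hN.ne' hk)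
    rw [hdist _ hNk, hdist _ hk1, ← ENNReal.ofReal_mul (by positivity)]
    congr 1
    have hkpos : (0:ℝ) < ((k:ℕ):ℝ) := by exact_mod_cast hk1
    have hNpos : (0:ℝ) < (N:ℝ) := by exact_mod_cast hN
    have h1 : (0:ℝ) < (N:ℝ) ^ α := Real.rpow_pos_of_pos hNpos _
    have h2 : (0:ℝ) < ((k:ℕ):ℝ) ^ α := Real.rpow_pos_of_pos hkpos _
    push_cast
    rw [Real.mul_rpow hNpos.le hkpos.le, Real.rpow_neg hNpos.le]
    field_simp
  have hle1 : ∀ p : Nat.Primes, ((p:ℕ):ℝ) ^ (-α) ≤ 1 := fun p =>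
    Real.rpow_le_one_of_one_le_of_nonpos (by exact_mod_cast p.2.one_lt.le) (by linarith)
  have hrpos : ∀ p : Nat.Primes, 0 < ((p:ℕ):ℝ) ^ (-α) := fun p =>
    Real.rpow_pos_of_pos (by exact_mod_cast p.2.pos) _
  have hcop : ∀ S : Finset Nat.Primes,
      μ (Z ⁻¹' {k | k ≠ 0 ∧ ∀ p ∈ S, ¬ ((p:ℕ) ∣ k)})
        = ENNReal.ofReal (∏ p ∈ S, (1 - ((p:ℕ):ℝ) ^ (-α))) := by
    intro S
    induction S using Finset.induction_on with
    | empty =>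
      have hset : {k : ℕ | k ≠ 0 ∧ ∀ p ∈ (∅ : Finset Nat.Primes), ¬((p:ℕ) ∣ k)}
          = ({0} : Set ℕ)ᶜ := by
        ext k; simp
      rw [hset, Finset.prod_empty, ENNReal.ofReal_one,
        show Z ⁻¹' (({0} : Set ℕ)ᶜ) = (Z ⁻¹' {0})ᶜ from rfl,
        prob_compl_eq_one_sub (hZ (measurableSet_singleton 0)),
        show Z ⁻¹' ({0} : Set ℕ) = {ω | Z ω = 0} from rfl, hZ0, tsub_zero]
    | @insert q S hq ih =>
      set C : Set ℕ := {k | k ≠ 0 ∧ ∀ p ∈ S, ¬((p:ℕ) ∣ k)} with hCdef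
      have h0C : 0 ∉ C := fun h => h.1 rfl
      have hDsub : (fun k => (q:ℕ) * k) '' C ⊆ C := by
        rintro _ ⟨j, hj, rfl⟩
        refine ⟨Nat.mul_ne_zero q.2.pos.ne' hj.1, fun p hp hdvd => ?_⟩
        rcases (Nat.Prime.dvd_mul p.2).mp hdvd with h | h
        · have heq : (p:ℕ) = (q:ℕ) := (Nat.prime_dvd_prime_iff_eq p.2 q.2).mp h
          exact hq (by rw [← show p = q from Subtype.coe_injective heq]; exact hp)
        · exact hj.2 p hp h
      have hEq : {k : ℕ | k ≠ 0 ∧ ∀ p ∈ insert q S, ¬((p:ℕ) ∣ k)}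
          = C \ ((fun k => (q:ℕ) * k) '' C) := by
        ext k
        simp only [Set.mem_setOf_eq, Set.mem_diff, Set.mem_image, Finset.mem_insert, hCdef]
        constructor
        · rintro ⟨hk0, h⟩
          refine ⟨⟨hk0, fun p hp => h p (Or.inr hp)⟩, ?_⟩
          rintro ⟨j, _, rfl⟩
          exact h q (Or.inl rfl) ⟨j, rfl⟩
        · rintro ⟨⟨hk0, h⟩, hnim⟩
          refine ⟨hk0, fun p hp => ?_⟩
          rcases hp with rfl | hp
          · intro hdvd
            obtain ⟨j, rfl⟩ := hdvd
            refine hnim ⟨j, ⟨?_, fun p' hp' hd => h p' hp' (hd.mul_left _)⟩, rfl⟩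
            rintro rfl; exact hk0 (mul_zero _)
          · exact h p hp
      rw [hEq, Set.preimage_diff,
        measure_diff (Set.preimage_mono hDsub) ((hZ trivial).nullMeasurableSet)
          (measure_ne_top μ _),
        hscale (q:ℕ) q.2.pos C h0C, ih, Finset.prod_insert hq]
      have hXnn : 0 ≤ ∏ p ∈ S, (1 - ((p:ℕ):ℝ) ^ (-α)) :=
        Finset.prod_nonneg fun p _ => by linarith [hle1 p]
      rw [← ENNReal.ofReal_mul (hrpos q).le,
        ← ENNReal.ofReal_sub _ (mul_nonneg (hrpos q).le hXnn)]
      congr 1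
      ring
  have hvalN : ∀ (S : Finset Nat.Primes) (m : Nat.Primes → ℕ), ∀ p ∈ S,
      padicValNat p (∏ p' ∈ S, ((p':ℕ)) ^ m p') = m p := by
    intro S m p hp
    haveI := Fact.mk p.2
    rw [← Finset.mul_prod_erase S _ hp]
    have hM0 : (∏ p' ∈ S.erase p, ((p':ℕ)) ^ m p') ≠ 0 :=
      Finset.prod_ne_zero_iff.mpr fun p' _ => pow_ne_zero _ p'.2.pos.ne'
    rw [padicValNat.mul (pow_ne_zero _ p.2.pos.ne') hM0, padicValNat.prime_pow]
    have hnd : ¬ ((p:ℕ) ∣ ∏ p' ∈ S.erase p, ((p':ℕ)) ^ m p') := by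
      intro hd
      obtain ⟨p', hp', hd'⟩ := (Prime.dvd_finset_prod_iff p.2.prime _).mp hd
      have heq : (p:ℕ) = (p':ℕ) :=
        (Nat.prime_dvd_prime_iff_eq p.2 p'.2).mp (p.2.dvd_of_dvd_pow hd')
      exact (Finset.ne_of_mem_erase hp') (Subtype.coe_injective heq).symm
    rw [padicValNat.eq_zero_of_not_dvd hnd, add_zero]
  have hval : ∀ (S : Finset Nat.Primes) (m : Nat.Primes → ℕ),
      μ (Z ⁻¹' {k | k ≠ 0 ∧ ∀ p ∈ S, padicValNat p k = m p})
        = ∏ p ∈ S, ENNReal.ofReal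
            ((1 - ((p:ℕ):ℝ) ^ (-α)) * (((p:ℕ):ℝ) ^ (-α)) ^ m p) := by
    intro S m
    set N : ℕ := ∏ p ∈ S, ((p:ℕ)) ^ m p with hNdef
    have hN0 : N ≠ 0 :=
      Finset.prod_ne_zero_iff.mpr fun p _ => pow_ne_zero _ p.2.pos.ne'
    set C : Set ℕ := {k | k ≠ 0 ∧ ∀ p ∈ S, ¬((p:ℕ) ∣ k)} with hCdef
    have h0C : 0 ∉ C := fun h => h.1 rfl
    have hEq : {k : ℕ | k ≠ 0 ∧ ∀ p ∈ S, padicValNat p k = m p}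
        = (fun k => N * k) '' C := by
      ext k
      simp only [Set.mem_setOf_eq, Set.mem_image, hCdef]
      constructor
      · rintro ⟨hk0, hv⟩
        have hdvd : N ∣ k := prod_primes_pow_dvd m k S (fun p hp => by
          haveI := Fact.mk p.2
          rw [← hv p hp]
          exact pow_padicValNat_dvd)
        obtain ⟨j, rfl⟩ := hdvd
        have hj0 : j ≠ 0 := by rintro rfl; exact hk0 (mul_zero _)
        refine ⟨j, ⟨hj0, fun p hp hd => ?_⟩, rfl⟩
        haveI := Fact.mk p.2
        have h1 : padicValNat p (N * j) = m p + padicValNat p j := by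
          rw [padicValNat.mul hN0 hj0, hvalN S m p hp]
        have h2 : 1 ≤ padicValNat p j :=
          one_le_padicValNat_of_dvd hj0 hd
        have h3 := hv p hp
        omega
      · rintro ⟨j, ⟨hj0, hj⟩, rfl⟩
        refine ⟨Nat.mul_ne_zero hN0 hj0, fun p hp => ?_⟩
        haveI := Fact.mk p.2
        rw [padicValNat.mul hN0 hj0, hvalN S m p hp,
          padicValNat.eq_zero_of_not_dvd (hj p hp), add_zero]
    rw [hEq, hscale N (Nat.pos_of_ne_zero hN0) C h0C, hcop S]
    have hNα : ((N:ℕ):ℝ) ^ (-α) = ∏ p ∈ S, (((p:ℕ):ℝ) ^ (-α)) ^ m p := by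
      rw [hNdef]
      push_cast
      rw [← Real.finset_prod_rpow S _ (fun p _ => by positivity) (-α)]
      refine Finset.prod_congr rfl fun p hp => ?_
      have hppos : (0:ℝ) < ((p:ℕ):ℝ) := by exact_mod_cast p.2.pos
      rw [← Real.rpow_natCast ((p:ℕ):ℝ) (m p), ← Real.rpow_mul hppos.le,
        mul_comm, Real.rpow_mul hppos.le, Real.rpow_natCast]
    rw [hNα, ← ENNReal.ofReal_mul (Finset.prod_nonneg fun p _ => by positivity),
      ← Finset.prod_mul_distrib,
      ENNReal.ofReal_prod_of_nonneg (fun p _ =>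
        mul_nonneg (pow_nonneg (hrpos p).le _) (by linarith [hle1 p]))]
    exact Finset.prod_congr rfl fun p _ => by rw [mul_comm]
  have hval' : ∀ (S : Finset Nat.Primes) (m : Nat.Primes → ℕ),
      μ {ω | ∀ p ∈ S, padicValNat p (Z ω) = m p}
        = ∏ p ∈ S, ENNReal.ofReal
            ((1 - ((p:ℕ):ℝ) ^ (-α)) * (((p:ℕ):ℝ) ^ (-α)) ^ m p) := by
    intro S m
    have hsetEq : {ω | ∀ p ∈ S, padicValNat p (Z ω) = m p} \ {ω | Z ω = 0}
        = Z ⁻¹' {k | k ≠ 0 ∧ ∀ p ∈ S, padicValNat p k = m p} := by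
      ext ω
      simp only [Set.mem_diff, Set.mem_setOf_eq, Set.mem_preimage]
      tauto
    calc μ {ω | ∀ p ∈ S, padicValNat p (Z ω) = m p}
        = μ ({ω | ∀ p ∈ S, padicValNat p (Z ω) = m p} \ {ω | Z ω = 0}) :=
          (measure_diff_null hZ0).symm
      _ = μ (Z ⁻¹' {k | k ≠ 0 ∧ ∀ p ∈ S, padicValNat p k = m p}) := by rw [hsetEq]
      _ = _ := hval S m
  refine ⟨?_, ?_⟩
  · rw [iIndepFun_iff_iIndep]
    refine ProbabilityTheory.iIndepSets.iIndep
      (fun p => Measurable.comap_le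
        (by exact (Measurable.of_discrete (f := padicValNat (p:ℕ))).comp hZ))
      (fun p => Set.range fun n : ℕ =>
        (fun ω => padicValNat p (Z ω)) ⁻¹' {n})
      (fun p => ?_) (fun p => ?_) ?_
    · rintro _ ⟨a, rfl⟩ _ ⟨b, rfl⟩ hne
      obtain ⟨ω, hω1, hω2⟩ := hne
      have hab : a = b := by
        simp only [Set.mem_preimage, Set.mem_singleton_iff] at hω1 hω2
        rw [← hω1, ← hω2]
      subst hab
      rw [Set.inter_self]
      exact ⟨a, rfl⟩
    · rw [show Nat.instMeasurableSpace = _ from natMS_eq_generateFrom_singletons, MeasurableSpace.comap_generateFrom]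
      congr 1
      rw [← Set.range_comp]
      rfl
    · rw [iIndepSets_iff]
      intro S f hf
      have hm : ∀ p ∈ S, ∃ n : ℕ,
          (fun ω => padicValNat p (Z ω)) ⁻¹' {n} = f p := fun p hp => hf p hp
      choose! n hn using hm
      have hinter : ⋂ p ∈ S, f p
          = {ω | ∀ p ∈ S, padicValNat p (Z ω) = n p} := by
        ext ω
        simp only [Set.mem_iInter, Set.mem_setOf_eq]
        refine forall₂_congr fun p hp => ?_
        rw [← hn p hp]
        rfl
      rw [hinter, hval' S n]
      refine Finset.prod_congr rfl fun p hp => ?_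
      rw [← hn p hp]
      have h1 := hval' {p} n
      simp only [Finset.mem_singleton, forall_eq, Finset.prod_singleton] at h1
      exact h1.symm
  · intro p m
    have h1 := hval' {p} (fun _ => m)
    simpa using h1
end

section
/- Let Z_α have the Zeta distribution ζ(α) for α > 1. Then (α − 1) log Z_α converges in distribution, as α → 1⁺, to the standard exponential distribution Exp(1); that is, for every t ≥ 0, P((α−1) log Z_α ≤ t) → 1 − e^{−t} as α → 1⁺. -/
/-!
Write `s = α - 1`. Since `x^{-s} - (x+1)^{-s} = s c^{-(s+1)}` for some `c ∈ (x, x+1)`, comparing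
the Hurwitz sum `ζ(α, x) = ∑_{n ≥ 0} (n + x)^{-α}` with this telescoping series gives
`x^{-s} ≤ s ζ(α, x) ≤ (s + 1) x^{-s}` for `x ≥ 1`. The event `(α - 1) log Z_α > t` is
`Z_α ≥ M := ⌊e^{t/s}⌋ + 1`, of probability `ζ(α, M) / ζ(α, 1)`, which is therefore within a
factor `α` of `M^{-s}`; and `M^{-s}` lies between `2^{-s} e^{-t}` and `e^{-t}`.
-/

open Filter

open Topology Set

lemma hasSum_sub_succ_of_antitone {f : ℕ → ℝ} {l : ℝ} (hf : Antitone f)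
    (hl : Tendsto f atTop (𝓝 l)) : HasSum (fun n => f n - f (n + 1)) (f 0 - l) := by
  rw [hasSum_iff_tendsto_nat_of_nonneg fun n => sub_nonneg.2 (hf n.le_succ)]
  simp_rw [Finset.sum_range_sub']
  exact tendsto_const_nhds.sub hl

noncomputable def hurwitzZetaR (α x : ℝ) : ℝ := ∑' n : ℕ, ((n : ℝ) + x) ^ (-α)

lemma summable_nat_add_rpow_neg {α x : ℝ} (hα : 1 < α) (hx : 0 < x) :
    Summable fun n : ℕ => ((n : ℝ) + x) ^ (-α) :=
  ((Real.summable_one_div_nat_add_rpow x α).2 hα).congr fun n => by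
    rw [abs_of_pos (by positivity), Real.rpow_neg (by positivity), one_div]

lemma exists_rpow_neg_sub_rpow_neg_add_one {x s : ℝ} (hx : 0 < x) :
    ∃ c ∈ Ioo x (x + 1), x ^ (-s) - (x + 1) ^ (-s) = s * c ^ (-(s + 1)) := by
  have hne : ∀ y ∈ Icc x (x + 1), y ≠ 0 := fun y hy => (hx.trans_le hy.1).ne'
  obtain ⟨c, hc, hderiv⟩ := exists_hasDerivAt_eq_slope (fun y : ℝ => y ^ (-s))
    (fun y => -s * y ^ (-s - 1)) (lt_add_one x)
    (fun y hy => (Real.continuousAt_rpow_const y (-s) (Or.inl (hne y hy))).continuousWithinAt)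
    (fun y hy => Real.hasDerivAt_rpow_const (Or.inl (hne y (Ioo_subset_Icc_self hy))))
  refine ⟨c, hc, ?_⟩
  rw [add_sub_cancel_left, div_one, show -s - 1 = -(s + 1) by ring] at hderiv
  linarith

lemma rpow_neg_sub_rpow_neg_add_one_le {x s : ℝ} (hx : 0 < x) (hs : 0 ≤ s) :
    x ^ (-s) - (x + 1) ^ (-s) ≤ s * x ^ (-(s + 1)) := by
  obtain ⟨c, hc, h⟩ := exists_rpow_neg_sub_rpow_neg_add_one (s := s) hx
  rw [h]
  exact mul_le_mul_of_nonneg_left (Real.rpow_le_rpow_of_nonpos hx hc.1.le (by linarith)) hs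

lemma mul_rpow_neg_le_rpow_neg_sub_rpow_neg_add_one {x s : ℝ} (hx : 0 < x) (hs : 0 ≤ s) :
    s * (x + 1) ^ (-(s + 1)) ≤ x ^ (-s) - (x + 1) ^ (-s) := by
  obtain ⟨c, hc, h⟩ := exists_rpow_neg_sub_rpow_neg_add_one (s := s) hx
  rw [h]
  exact mul_le_mul_of_nonneg_left
    (Real.rpow_le_rpow_of_nonpos (hx.trans hc.1) hc.2.le (by linarith)) hs

lemma hasSum_rpow_neg_sub {x s : ℝ} (hx : 0 < x) (hs : 0 < s) :
    HasSum (fun n : ℕ => ((n : ℝ) + x) ^ (-s) - ((n : ℝ) + x + 1) ^ (-s)) (x ^ (-s)) := by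
  have hanti : Antitone fun n : ℕ => ((n : ℝ) + x) ^ (-s) := fun m n hmn =>
    Real.rpow_le_rpow_of_nonpos (by positivity) (by gcongr) (by linarith)
  have hlim : Tendsto (fun n : ℕ => ((n : ℝ) + x) ^ (-s)) atTop (𝓝 0) :=
    (tendsto_rpow_neg_atTop hs).comp (tendsto_atTop_add_const_right _ x tendsto_natCast_atTop_atTop)
  simpa [add_right_comm] using hasSum_sub_succ_of_antitone hanti hlim

lemma rpow_neg_le_mul_hurwitzZetaR {x s : ℝ} (hx : 0 < x) (hs : 0 < s) :
    x ^ (-s) ≤ s * hurwitzZetaR (s + 1) x := by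
  have hsum := (summable_nat_add_rpow_neg (lt_add_of_pos_left 1 hs) hx).mul_left s
  rw [hurwitzZetaR, ← tsum_mul_left, ← (hasSum_rpow_neg_sub hx hs).tsum_eq]
  exact (hasSum_rpow_neg_sub hx hs).summable.tsum_le_tsum
    (fun n => rpow_neg_sub_rpow_neg_add_one_le (by positivity) hs.le) hsum

lemma mul_hurwitzZetaR_le {x s : ℝ} (hx : 0 < x) (hs : 0 < s) :
    s * hurwitzZetaR (s + 1) x ≤ x ^ (-s) + s * x ^ (-(s + 1)) := by
  have hsum := summable_nat_add_rpow_neg (lt_add_of_pos_left 1 hs) hx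
  have hshift : s * ∑' n : ℕ, ((n : ℝ) + x + 1) ^ (-(s + 1)) ≤ x ^ (-s) := by
    rw [← tsum_mul_left, ← (hasSum_rpow_neg_sub hx hs).tsum_eq]
    refine Summable.tsum_le_tsum
      (fun n => mul_rpow_neg_le_rpow_neg_sub_rpow_neg_add_one (by positivity) hs.le)
      ?_ (hasSum_rpow_neg_sub hx hs).summable
    have hx1 : 0 < x + 1 := by positivity
    exact ((summable_nat_add_rpow_neg (lt_add_of_pos_left 1 hs) hx1).mul_left s).congr
      fun n => by rw [add_assoc]
  rw [hurwitzZetaR, hsum.tsum_eq_zero_add]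
  simp only [Nat.cast_zero, zero_add, Nat.cast_add, Nat.cast_one]
  have : ∀ n : ℕ, (n : ℝ) + 1 + x = n + x + 1 := fun n => by ring
  simp only [this]
  linarith

lemma hurwitzZetaR_div_hurwitzZetaR_one_mem_Icc {x s : ℝ} (hx : 1 ≤ x) (hs : 0 < s) :
    hurwitzZetaR (s + 1) x / hurwitzZetaR (s + 1) 1 ∈
      Icc (x ^ (-s) / (s + 1)) ((s + 1) * x ^ (-s)) := by
  have hx0 : 0 < x := one_pos.trans_le hx
  have hone_lo := rpow_neg_le_mul_hurwitzZetaR one_pos hs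
  have hone_hi := mul_hurwitzZetaR_le one_pos hs
  have hx_lo := rpow_neg_le_mul_hurwitzZetaR hx0 hs
  have hx_hi : s * hurwitzZetaR (s + 1) x ≤ (s + 1) * x ^ (-s) := by
    have := Real.rpow_le_rpow_of_exponent_le hx (show -(s + 1) ≤ -s by linarith)
    nlinarith [mul_hurwitzZetaR_le hx0 hs]
  simp only [Real.one_rpow, mul_one] at hone_lo hone_hi
  rw [← mul_div_mul_left (hurwitzZetaR (s + 1) x) _ hs.ne']
  have hpos : 0 < s * hurwitzZetaR (s + 1) 1 := by linarith
  constructor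
  · rw [div_le_div_iff₀ (by linarith) hpos]
    nlinarith [Real.rpow_nonneg hx0.le (-s)]
  · rw [div_le_iff₀ hpos]
    nlinarith [Real.rpow_nonneg hx0.le (-s)]

lemma tsum_ite_log_le_eq_zetaR_sub {α t : ℝ} (hα : 1 < α) :
    (∑' k : ℕ, if (α - 1) * Real.log ((k : ℝ) + 1) ≤ t then ((k : ℝ) + 1) ^ (-α) else 0) =
      zetaR α - hurwitzZetaR α (⌊Real.exp (t / (α - 1))⌋₊ + 1) := by
  set N := ⌊Real.exp (t / (α - 1))⌋₊
  have hcond : ∀ k : ℕ, (α - 1) * Real.log ((k : ℝ) + 1) ≤ t ↔ k < N := by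
    intro k
    rw [mul_comm, ← le_div_iff₀ (by linarith), Real.log_le_iff_le_exp (by positivity),
      Nat.lt_iff_add_one_le, Nat.le_floor_iff (Real.exp_pos _).le]
    norm_cast
  have hsum := summable_nat_add_rpow_neg hα one_pos
  rw [tsum_eq_sum (s := Finset.range N) fun k hk => if_neg (by simpa [hcond] using hk),
    Finset.sum_congr rfl fun k hk => if_pos ((hcond k).2 (Finset.mem_range.1 hk)),
    zetaR, ← hsum.sum_add_tsum_nat_add N, hurwitzZetaR]
  have : ∀ n : ℕ, ((n + N : ℕ) : ℝ) + 1 = n + (N + 1) := fun n => by push_cast; ring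
  simp only [this, add_sub_cancel_right]

lemma rpow_neg_floor_add_one_mem_Icc {y s : ℝ} (hy : 1 ≤ y) (hs : 0 ≤ s) :
    ((⌊y⌋₊ : ℝ) + 1) ^ (-s) ∈ Icc ((2 : ℝ) ^ (-s) * y ^ (-s)) (y ^ (-s)) := by
  have hy0 : 0 < y := one_pos.trans_le hy
  refine ⟨?_, Real.rpow_le_rpow_of_nonpos hy0 (Nat.lt_floor_add_one y).le (by linarith)⟩
  rw [← Real.mul_rpow zero_le_two hy0.le]
  exact Real.rpow_le_rpow_of_nonpos (by positivity) (by linarith [Nat.floor_le hy0.le])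
    (by linarith)

/-- `P((α - 1) log Z_α ≤ t)` for `Z_α ∼ ζ(α)`, writing `Z_α = k + 1`. -/
noncomputable def zetaLogCDF (α t : ℝ) : ℝ :=
  (∑' k : ℕ, if (α - 1) * Real.log ((k : ℝ) + 1) ≤ t then ((k : ℝ) + 1) ^ (-α) else 0) / zetaR α

lemma zetaLogCDF_mem_Icc {t α : ℝ} (ht : 0 ≤ t) (hα : 1 < α) :
    zetaLogCDF α t ∈
      Icc (1 - α * Real.exp (-t)) (1 - (2 : ℝ) ^ (-(α - 1)) * Real.exp (-t) / α) := by
  set s := α - 1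
  have hs : 0 < s := sub_pos.2 hα
  have hα_eq : α = s + 1 := by ring
  have hy : 1 ≤ Real.exp (t / s) := Real.one_le_exp (by positivity)
  have hexp : Real.exp (t / s) ^ (-s) = Real.exp (-t) := by
    rw [← Real.exp_mul]; congr 1; field_simp
  obtain ⟨hg_lo, hg_hi⟩ := rpow_neg_floor_add_one_mem_Icc hy hs.le
  obtain ⟨hr_lo, hr_hi⟩ := hurwitzZetaR_div_hurwitzZetaR_one_mem_Icc
    (le_add_of_nonneg_left (Nat.cast_nonneg ⌊Real.exp (t / s)⌋₊)) hs
  rw [hexp] at hg_lo hg_hi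
  have hζ : zetaR α = hurwitzZetaR α 1 := rfl
  have hζpos : 0 < zetaR α := by
    have := rpow_neg_le_mul_hurwitzZetaR one_pos hs
    rw [Real.one_rpow, ← hα_eq, ← hζ] at this
    exact pos_of_mul_pos_right (one_pos.trans_le this) hs.le
  rw [zetaLogCDF, tsum_ite_log_le_eq_zetaR_sub hα, sub_div, div_self hζpos.ne', hζ, hα_eq]
  rw [← hα_eq] at hr_lo hr_hi ⊢
  constructor
  · nlinarith
  · have : (2 : ℝ) ^ (-s) * Real.exp (-t) / α ≤ ((⌊Real.exp (t / s)⌋₊ : ℝ) + 1) ^ (-s) / α :=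
      div_le_div_of_nonneg_right hg_lo (by linarith)
    linarith

/-- If `Z_α` has the Zeta distribution of parameter `α > 1`, then `(α−1) log Z_α`
converges in distribution to `Exp(1)` as `α → 1⁺`: for every `t ≥ 0`,
`P((α−1) log Z_α ≤ t) = (∑_{k≥1, (α−1) log k ≤ t} k^{−α})/ζ(α) → 1 − e^{−t}`. -/
theorem stmt7 (t : ℝ) (ht : 0 ≤ t) :
    Tendsto (fun α : ℝ =>
        (∑' k : ℕ, if (α - 1) * Real.log ((k : ℝ) + 1) ≤ t then ((k : ℝ) + 1) ^ (-α) else 0) /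
          zetaR α)
      (nhdsWithin 1 (Set.Ioi 1)) (nhds (1 - Real.exp (-t))) := by
  have hlo : Tendsto (fun α : ℝ => 1 - α * Real.exp (-t)) (𝓝[>] 1) (𝓝 (1 - Real.exp (-t))) := by
    refine tendsto_nhdsWithin_of_tendsto_nhds ?_
    have : ContinuousAt (fun α : ℝ => 1 - α * Real.exp (-t)) 1 := by fun_prop
    simpa using this.tendsto
  have hhi : Tendsto (fun α : ℝ => 1 - (2 : ℝ) ^ (-(α - 1)) * Real.exp (-t) / α) (𝓝[>] 1)
      (𝓝 (1 - Real.exp (-t))) := by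
    refine tendsto_nhdsWithin_of_tendsto_nhds ?_
    have : ContinuousAt (fun α : ℝ => 1 - (2 : ℝ) ^ (-(α - 1)) * Real.exp (-t) / α) 1 := by
      fun_prop (disch := norm_num)
    simpa using this.tendsto
  refine tendsto_of_tendsto_of_tendsto_of_le_of_le' hlo hhi ?_ ?_ <;>
    filter_upwards [self_mem_nhdsWithin] with α hα
  exacts [(zetaLogCDF_mem_Icc ht hα).1, (zetaLogCDF_mem_Icc ht hα).2]
end

section
/- Let d_α have the delta-Zeta distribution δζ(α) for α > 1. Then (α − 1) log d_α converges in distribution, as α → 1⁺, to the standard exponential distribution Exp(1); that is, for every t ≥ 0, P((α−1) log d_α ≤ t) → 1 − e^{−t} as α → 1⁺. -/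
open Filter

namespace Stmt10Aux
open Real

/-- Bernoulli inequality for exponents in `[-1,0]`. -/
lemma bern {p s : ℝ} (hp1 : -1 ≤ p) (hp2 : p ≤ 0) (hs : -1 < s) :
    1 + p * s ≤ (1 + s) ^ p := by
  have hq1 : 0 ≤ -p := by linarith
  have hq2 : -p ≤ 1 := by linarith
  have hs1 : 0 < 1 + s := by linarith
  have h1 : (1 + s) ^ (-p) ≤ 1 + (-p) * s :=
    rpow_one_add_le_one_add_mul_self hs.le hq1 hq2
  have hA : 0 < (1 + s) ^ (-p) := rpow_pos_of_pos hs1 _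
  have hps : p = -(-p) := by ring
  rw [hps, rpow_neg hs1.le]
  rcases le_or_gt (1 + -(-p) * s) 0 with h | h
  · exact h.trans (inv_pos.2 hA).le
  · have h2 : (1 + -(-p) * s) * ((1 + s) ^ (-p)) ≤ (1 + -(-p) * s) * (1 + (-p) * s) :=
      mul_le_mul_of_nonneg_left h1 h.le
    have h3 : (1 + -(-p) * s) * (1 + (-p) * s) ≤ 1 := by nlinarith [sq_nonneg (p * s)]
    have h4 : 1 + -(-p) * s ≤ 1 / ((1 + s) ^ (-p)) :=
      (le_div_iff₀ hA).2 (by linarith)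
    simpa [one_div] using h4

lemma tel {α c : ℝ} (K : ℕ) :
    ∑ k ∈ Finset.range K, ((c + (k : ℝ)) ^ (1 - α) - (c + (k : ℝ) + 1) ^ (1 - α))
      = c ^ (1 - α) - (c + (K : ℝ)) ^ (1 - α) := by
  have h := Finset.sum_range_sub' (f := fun k : ℕ => (c + (k : ℝ)) ^ (1 - α)) K
  simp only [Nat.cast_add, Nat.cast_one, Nat.cast_zero, add_zero] at h
  rw [← h]
  exact Finset.sum_congr rfl fun k _ => by rw [add_assoc]

lemma mvt_upper {α x : ℝ} (hα1 : 1 < α) (hα2 : α < 2) (hx : 0 < x) :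
    x ^ (1 - α) - (x + 1) ^ (1 - α) ≤ (α - 1) * x ^ (-α) := by
  have hb : 1 + (1 - α) * (1 / x) ≤ (1 + 1 / x) ^ (1 - α) :=
    bern (by linarith) (by linarith) (by have := one_div_pos.2 hx; linarith)
  have hx1 : (0 : ℝ) < 1 + 1 / x := by positivity
  have key : (1 + 1 / x) ^ (1 - α) * x ^ (1 - α) = (x + 1) ^ (1 - α) := by
    rw [← Real.mul_rpow hx1.le hx.le]
    congr 1
    field_simp
  have hxp : 0 < x ^ (1 - α) := rpow_pos_of_pos hx _
  have h2 : (1 + (1 - α) * (1 / x)) * x ^ (1 - α) ≤ (x + 1) ^ (1 - α) := by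
    rw [← key]
    exact mul_le_mul_of_nonneg_right hb hxp.le
  have h3 : x ^ (1 - α) * (1 / x) = x ^ (-α) := by
    rw [one_div, ← Real.rpow_neg_one x, ← Real.rpow_add hx]
    congr 1; ring
  nlinarith [h2, h3]

lemma mvt_lower {α x : ℝ} (hα1 : 1 < α) (hα2 : α < 2) (hx : 0 < x) :
    (α - 1) * (x + 1) ^ (-α) ≤ x ^ (1 - α) - (x + 1) ^ (1 - α) := by
  have hx1 : (0 : ℝ) < x + 1 := by linarith
  have hs : (-1 : ℝ) < -(1 / (x + 1)) := by
    have : 1 / (x + 1) < 1 := by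
      rw [div_lt_one hx1]; linarith
    linarith
  have hb : 1 + (1 - α) * (-(1 / (x + 1))) ≤ (1 + -(1 / (x + 1))) ^ (1 - α) :=
    bern (by linarith) (by linarith) hs
  have key : (1 + -(1 / (x + 1))) ^ (1 - α) * (x + 1) ^ (1 - α) = x ^ (1 - α) := by
    rw [← Real.mul_rpow (by nlinarith [hs]) hx1.le]
    congr 1
    field_simp
    ring
  have hxp : 0 < (x + 1) ^ (1 - α) := rpow_pos_of_pos hx1 _
  have h2 : (1 + (1 - α) * (-(1 / (x + 1)))) * (x + 1) ^ (1 - α) ≤ x ^ (1 - α) := by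
    rw [← key]
    exact mul_le_mul_of_nonneg_right hb hxp.le
  have h3 : (x + 1) ^ (1 - α) * (1 / (x + 1)) = (x + 1) ^ (-α) := by
    rw [one_div, ← Real.rpow_neg_one (x + 1), ← Real.rpow_add hx1]
    congr 1; ring
  nlinarith [h2, h3]

lemma tail_summable {α : ℝ} (hα : 1 < α) {c : ℝ} (hc : 1 ≤ c) :
    Summable (fun k : ℕ => (c + k) ^ (-α)) := by
  have h0 : Summable (fun n : ℕ => (n : ℝ) ^ (-α)) :=
    Real.summable_nat_rpow.2 (by linarith)
  have h1 : Summable (fun n : ℕ => ((n + 1 : ℕ) : ℝ) ^ (-α)) :=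
    (summable_nat_add_iff 1).2 h0
  refine Summable.of_nonneg_of_le (fun k => rpow_nonneg (by positivity) _) (fun k => ?_) h1
  exact Real.rpow_le_rpow_of_nonpos (by push_cast; positivity) (by push_cast; linarith)
    (by linarith)

lemma tail_lower {α : ℝ} (hα1 : 1 < α) (hα2 : α < 2) {c : ℝ} (hc : 1 ≤ c) :
    c ^ (1 - α) / (α - 1) ≤ ∑' k : ℕ, (c + k) ^ (-α) := by
  have hsum := tail_summable hα1 hc
  have key : ∀ K : ℕ,
      (c ^ (1 - α) - (c + K) ^ (1 - α)) / (α - 1) ≤ ∑ k ∈ Finset.range K, (c + k) ^ (-α) := by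
    intro K
    have tel := tel (α := α) (c := c) K
    have hterm : ∀ k ∈ Finset.range K,
        ((c + (k : ℝ)) ^ (1 - α) - (c + (k : ℝ) + 1) ^ (1 - α)) ≤ (α - 1) * (c + k) ^ (-α) := by
      intro k _
      have := mvt_upper hα1 hα2 (x := c + k) (by positivity)
      linarith
    have hsum2 := Finset.sum_le_sum hterm
    rw [tel] at hsum2
    rw [div_le_iff₀ (by linarith : (0:ℝ) < α - 1)]
    calc c ^ (1 - α) - (c + K) ^ (1 - α) ≤ ∑ k ∈ Finset.range K, (α - 1) * (c + k) ^ (-α) := hsum2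
      _ = (∑ k ∈ Finset.range K, (c + k) ^ (-α)) * (α - 1) := by
          rw [← Finset.mul_sum]; ring
  have hc0 : Tendsto (fun K : ℕ => c + (K : ℝ)) atTop atTop :=
    tendsto_atTop_add_const_left _ c tendsto_natCast_atTop_atTop
  have h0 : Tendsto (fun K : ℕ => (c + (K : ℝ)) ^ (1 - α)) atTop (nhds 0) := by
    have := (tendsto_rpow_neg_atTop (y := α - 1) (by linarith)).comp hc0
    simpa [Function.comp_def, neg_sub] using this
  have hlim : Tendsto (fun K : ℕ => (c ^ (1 - α) - (c + (K : ℝ)) ^ (1 - α)) / (α - 1)) atTop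
      (nhds (c ^ (1 - α) / (α - 1))) := by
    have := (tendsto_const_nhds (x := c ^ (1 - α)) (f := atTop (α := ℕ))).sub h0
    simpa using this.div_const (α - 1)
  refine le_of_tendsto hlim (Eventually.of_forall fun K => (key K).trans ?_)
  exact Summable.sum_le_tsum _ (fun k _ => rpow_nonneg (by positivity) _) hsum

lemma tail_upper {α : ℝ} (hα1 : 1 < α) (hα2 : α < 2) {c : ℝ} (hc : 1 ≤ c) :
    ∑' k : ℕ, (c + 1 + k) ^ (-α) ≤ c ^ (1 - α) / (α - 1) := by
  apply Real.tsum_le_of_sum_range_le (fun n => rpow_nonneg (by positivity) _)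
  intro K
  have tel := tel (α := α) (c := c) K
  have hterm : ∀ k ∈ Finset.range K,
      (c + 1 + (k : ℝ)) ^ (-α) ≤ ((c + (k : ℝ)) ^ (1 - α) - (c + (k : ℝ) + 1) ^ (1 - α)) / (α - 1) := by
    intro k _
    have h := mvt_lower hα1 hα2 (x := c + k) (by positivity)
    rw [le_div_iff₀ (by linarith : (0:ℝ) < α - 1)]
    have heq : c + 1 + (k : ℝ) = c + (k : ℝ) + 1 := by ring
    rw [heq]
    linarith
  calc ∑ k ∈ Finset.range K, (c + 1 + (k : ℝ)) ^ (-α)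
      ≤ ∑ k ∈ Finset.range K, ((c + (k : ℝ)) ^ (1 - α) - (c + (k : ℝ) + 1) ^ (1 - α)) / (α - 1) :=
        Finset.sum_le_sum hterm
    _ = (c ^ (1 - α) - (c + K) ^ (1 - α)) / (α - 1) := by rw [← Finset.sum_div, tel]
    _ ≤ c ^ (1 - α) / (α - 1) := by
        rw [div_le_div_iff_of_pos_right (by linarith : (0:ℝ) < α - 1)]
        have hX : 0 ≤ (c + (K : ℝ)) ^ (1 - α) := rpow_nonneg (by positivity) _
        linarith

lemma zeta_summable {α : ℝ} (hα : 1 < α) :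
    Summable (fun n : ℕ => ((n : ℝ) + 1) ^ (-α)) :=
  (tail_summable hα le_rfl).congr (fun n => by rw [add_comm])

lemma zeta_eq_tail (α : ℝ) : zetaR α = ∑' k : ℕ, ((1 : ℝ) + k) ^ (-α) :=
  tsum_congr fun n => by rw [add_comm]

lemma zeta_lower {α : ℝ} (hα1 : 1 < α) (hα2 : α < 2) : 1 / (α - 1) ≤ zetaR α := by
  rw [zeta_eq_tail]
  have h := tail_lower hα1 hα2 (c := 1) le_rfl
  rwa [Real.one_rpow] at h

lemma zeta_pos {α : ℝ} (hα1 : 1 < α) (hα2 : α < 2) : 0 < zetaR α :=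
  lt_of_lt_of_le (by
    have h : (0:ℝ) < α - 1 := by linarith
    positivity) (zeta_lower hα1 hα2)

lemma zeta_upper {α : ℝ} (hα1 : 1 < α) (hα2 : α < 2) : zetaR α ≤ 1 + 1 / (α - 1) := by
  have hsum := zeta_summable hα1
  have hsplit := Summable.sum_add_tsum_nat_add 1 hsum
  unfold zetaR
  rw [← hsplit]
  have h1 : ∑ i ∈ Finset.range 1, ((i : ℝ) + 1) ^ (-α) = 1 := by
    simp [Real.one_rpow]
  have h2 : ∑' (i : ℕ), (((i + 1 : ℕ) : ℝ) + 1) ^ (-α) ≤ 1 / (α - 1) := by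
    have h := tail_upper hα1 hα2 (c := 1) le_rfl
    rw [Real.one_rpow] at h
    refine le_trans (le_of_eq (tsum_congr fun i => ?_)) h
    congr 1
    push_cast; ring
  rw [h1]
  linarith

lemma step_eq (t : ℝ) (ht : 0 ≤ t) {α : ℝ} (hα1 : 1 < α) (hα2 : α < 2) :
    (∑' k : ℕ, if (α - 1) * Real.log ((k : ℝ) + 1) ≤ t then
        ((k : ℝ) + 1) * (((k : ℝ) + 1) ^ (-α) - ((k : ℝ) + 2) ^ (-α)) / zetaR α else 0)
    = 1 - ((∑' k : ℕ, ((⌊Real.exp (t / (α - 1))⌋₊ : ℝ) + 2 + k) ^ (-α))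
        + ((⌊Real.exp (t / (α - 1))⌋₊ : ℝ) + 1) ^ (1 - α)) / zetaR α := by
  set n : ℕ := ⌊Real.exp (t / (α - 1))⌋₊ with hn
  have hα0 : (0:ℝ) < α - 1 := by linarith
  have hEpos : 0 < Real.exp (t / (α - 1)) := Real.exp_pos _
  have hE1 : 1 ≤ Real.exp (t / (α - 1)) := Real.one_le_exp (div_nonneg ht hα0.le)
  have hcond : ∀ k : ℕ, ((α - 1) * Real.log ((k : ℝ) + 1) ≤ t) ↔ k < n := by
    intro k
    rw [← le_div_iff₀' hα0, Real.log_le_iff_le_exp (by positivity)]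
    constructor
    · intro h
      have h2 : (k + 1 : ℕ) ≤ n := Nat.le_floor (by push_cast; exact h)
      omega
    · intro h
      have h2 : (k + 1 : ℕ) ≤ n := by omega
      have h3 := (Nat.le_floor_iff hEpos.le).1 h2
      push_cast at h3
      linarith
  have hζ : 0 < zetaR α := zeta_pos hα1 hα2
  have hts : (∑' k : ℕ, if (α - 1) * Real.log ((k : ℝ) + 1) ≤ t then
        ((k : ℝ) + 1) * (((k : ℝ) + 1) ^ (-α) - ((k : ℝ) + 2) ^ (-α)) / zetaR α else 0)
      = ∑ k ∈ Finset.range n,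
        ((k : ℝ) + 1) * (((k : ℝ) + 1) ^ (-α) - ((k : ℝ) + 2) ^ (-α)) / zetaR α := by
    rw [tsum_eq_sum (s := Finset.range n)
      (fun k hk => if_neg (fun h => hk (Finset.mem_range.2 ((hcond k).1 h))))]
    exact Finset.sum_congr rfl fun k hk => if_pos ((hcond k).2 (Finset.mem_range.1 hk))
  have hnum : ∑ k ∈ Finset.range n, ((k : ℝ) + 1) * (((k : ℝ) + 1) ^ (-α) - ((k : ℝ) + 2) ^ (-α))
      = zetaR α - (∑' k : ℕ, ((n : ℝ) + 2 + k) ^ (-α)) - ((n : ℝ) + 1) ^ (1 - α) := by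
    have e1 : ∀ y : ℝ, 0 < y → y * y ^ (-α) = y ^ (1 - α) := by
      intro y hy
      rw [show (1 - α) = 1 + -α by ring, Real.rpow_add hy, Real.rpow_one]
    have hterm : ∀ k : ℕ, ((k : ℝ) + 1) * (((k : ℝ) + 1) ^ (-α) - ((k : ℝ) + 2) ^ (-α))
        = ((((k : ℝ) + 1) ^ (1 - α)) - (((k : ℝ) + 2) ^ (1 - α))) + ((k : ℝ) + 2) ^ (-α) := by
      intro k
      rw [← e1 ((k : ℝ) + 1) (by positivity), ← e1 ((k : ℝ) + 2) (by positivity)]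
      ring
    rw [Finset.sum_congr rfl (fun k _ => hterm k), Finset.sum_add_distrib]
    have t1 : ∑ k ∈ Finset.range n, ((((k : ℝ) + 1) ^ (1 - α)) - (((k : ℝ) + 2) ^ (1 - α)))
        = 1 - ((n : ℝ) + 1) ^ (1 - α) := by
      have h := tel (α := α) (c := 1) n
      rw [Real.one_rpow] at h
      calc ∑ k ∈ Finset.range n, ((((k : ℝ) + 1) ^ (1 - α)) - (((k : ℝ) + 2) ^ (1 - α)))
          = ∑ k ∈ Finset.range n, (((1 : ℝ) + (k : ℝ)) ^ (1 - α) - ((1 : ℝ) + (k : ℝ) + 1) ^ (1 - α)) := by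
            refine Finset.sum_congr rfl fun k _ => ?_
            rw [show (1 : ℝ) + (k : ℝ) = (k : ℝ) + 1 by ring,
               show (k : ℝ) + 1 + 1 = (k : ℝ) + 2 by ring]
        _ = 1 - ((1 : ℝ) + (n : ℝ)) ^ (1 - α) := h
        _ = 1 - ((n : ℝ) + 1) ^ (1 - α) := by rw [add_comm (1 : ℝ) (n : ℝ)]
    have t2 : ∑ k ∈ Finset.range n, ((k : ℝ) + 2) ^ (-α)
        = (∑ j ∈ Finset.range (n + 1), ((j : ℝ) + 1) ^ (-α)) - 1 := by
      have h := Finset.sum_range_succ' (f := fun j : ℕ => ((j : ℝ) + 1) ^ (-α)) n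
      rw [h]
      have hf0 : (((0 : ℕ) : ℝ) + 1) ^ (-α) = 1 := by norm_num
      have hfs : ∀ k : ℕ, (((k + 1 : ℕ) : ℝ) + 1) ^ (-α) = ((k : ℝ) + 2) ^ (-α) := by
        intro k; congr 1; push_cast; ring
      rw [hf0, Finset.sum_congr rfl (fun k _ => hfs k)]
      ring
    have hsplit := Summable.sum_add_tsum_nat_add (f := fun j : ℕ => ((j : ℝ) + 1) ^ (-α)) (n + 1)
      (zeta_summable hα1)
    have htail : ∑' i : ℕ, (((i + (n + 1) : ℕ) : ℝ) + 1) ^ (-α)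
        = ∑' k : ℕ, ((n : ℝ) + 2 + k) ^ (-α) := by
      refine tsum_congr fun i => ?_
      congr 1; push_cast; ring
    have hzeta : zetaR α = ∑' j : ℕ, ((j : ℝ) + 1) ^ (-α) := rfl
    rw [t1, t2]
    rw [htail] at hsplit
    rw [hzeta, ← hsplit]
    ring
  rw [hts, ← Finset.sum_div, hnum]
  field_simp
  ring

lemma step_tendsto (t : ℝ) (ht : 0 ≤ t) :
    Tendsto (fun α : ℝ => ((∑' k : ℕ, ((⌊Real.exp (t / (α - 1))⌋₊ : ℝ) + 2 + k) ^ (-α))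
        + ((⌊Real.exp (t / (α - 1))⌋₊ : ℝ) + 1) ^ (1 - α)) / zetaR α)
      (nhdsWithin 1 (Set.Ioi 1)) (nhds (Real.exp (-t))) := by
  have hev : ∀ᶠ α in nhdsWithin (1:ℝ) (Set.Ioi 1), 1 < α ∧ α < 2 := by
    filter_upwards [Ioo_mem_nhdsGT_of_mem (Set.left_mem_Ico.2 one_lt_two)] with α hα
    exact ⟨hα.1, hα.2⟩
  have key : ∀ α : ℝ, 1 < α → α < 2 →
      ((3:ℝ) ^ (1 - α) * Real.exp (-t) / α ≤
        ((∑' k : ℕ, ((⌊Real.exp (t / (α - 1))⌋₊ : ℝ) + 2 + k) ^ (-α))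
          + ((⌊Real.exp (t / (α - 1))⌋₊ : ℝ) + 1) ^ (1 - α)) / zetaR α ∧
      ((∑' k : ℕ, ((⌊Real.exp (t / (α - 1))⌋₊ : ℝ) + 2 + k) ^ (-α))
          + ((⌊Real.exp (t / (α - 1))⌋₊ : ℝ) + 1) ^ (1 - α)) / zetaR α ≤ α * Real.exp (-t)) := by
    intro α hα1 hα2
    set n : ℕ := ⌊Real.exp (t / (α - 1))⌋₊ with hn
    set E : ℝ := Real.exp (t / (α - 1)) with hE
    set T : ℝ := ∑' k : ℕ, ((n : ℝ) + 2 + k) ^ (-α) with hT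
    set R : ℝ := ((n : ℝ) + 1) ^ (1 - α) with hR
    have hα0 : (0:ℝ) < α - 1 := by linarith
    have hEpos : 0 < E := Real.exp_pos _
    have hE1 : 1 ≤ E := Real.one_le_exp (div_nonneg ht hα0.le)
    have hEn : (n : ℝ) ≤ E := Nat.floor_le hEpos.le
    have hEn2 : E < (n : ℝ) + 1 := Nat.lt_floor_add_one E
    have hζpos : 0 < zetaR α := zeta_pos hα1 hα2
    have hζlo : 1 / (α - 1) ≤ zetaR α := zeta_lower hα1 hα2
    have hζup : zetaR α ≤ 1 + 1 / (α - 1) := zeta_upper hα1 hα2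
    have hEexp : E ^ (1 - α) = Real.exp (-t) := by
      rw [hE, Real.rpow_def_of_pos (Real.exp_pos _), Real.log_exp]
      congr 1
      field_simp
      ring
    have hT_up : T ≤ ((n : ℝ) + 1) ^ (1 - α) / (α - 1) := by
      have h := tail_upper hα1 hα2 (c := (n : ℝ) + 1)
        (by have h0 : (0:ℝ) ≤ (n:ℝ) := Nat.cast_nonneg n; linarith)
      refine le_trans (le_of_eq (tsum_congr fun k => ?_)) h
      congr 1; ring
    have hT_lo : ((n : ℝ) + 2) ^ (1 - α) / (α - 1) ≤ T := by
      have h := tail_lower hα1 hα2 (c := (n : ℝ) + 2)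
        (by have h0 : (0:ℝ) ≤ (n:ℝ) := Nat.cast_nonneg n; linarith)
      exact h
    have hR_le : R ≤ Real.exp (-t) := by
      rw [hR, ← hEexp]
      exact Real.rpow_le_rpow_of_nonpos hEpos hEn2.le (by linarith)
    have hT_nonneg : 0 ≤ T :=
      tsum_nonneg fun k => Real.rpow_nonneg (by positivity) _
    have hR_nonneg : 0 ≤ R := Real.rpow_nonneg (by positivity) _
    have hkey1 : (α - 1) * (1 / (α - 1)) = 1 := by field_simp
    have h1 : 1 ≤ (α - 1) * zetaR α := by
      have h := mul_le_mul_of_nonneg_left hζlo hα0.le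
      rw [hkey1] at h
      exact h
    constructor
    · -- lower bound
      have h3E : (n : ℝ) + 2 ≤ 3 * E := by linarith
      have hr1 : (3 * E) ^ (1 - α) ≤ ((n : ℝ) + 2) ^ (1 - α) :=
        Real.rpow_le_rpow_of_nonpos (by positivity) h3E (by linarith)
      have hr2 : (3 * E) ^ (1 - α) = 3 ^ (1 - α) * Real.exp (-t) := by
        rw [Real.mul_rpow (by norm_num) hEpos.le, hEexp]
      have hstep1 : 3 ^ (1 - α) * Real.exp (-t) / (α - 1) ≤ T := by
        refine le_trans ?_ hT_lo
        rw [div_le_div_iff_of_pos_right hα0]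
        rw [← hr2]
        exact hr1
      have hstep2 : 3 ^ (1 - α) * Real.exp (-t) / (α - 1) / (1 + 1 / (α - 1))
          ≤ 3 ^ (1 - α) * Real.exp (-t) / (α - 1) / zetaR α :=
        div_le_div_of_nonneg_left (by positivity) hζpos hζup
      have hstep3 : 3 ^ (1 - α) * Real.exp (-t) / (α - 1) / zetaR α ≤ T / zetaR α := by
        rw [div_le_div_iff_of_pos_right hζpos]
        exact hstep1
      have hstep4 : T / zetaR α ≤ (T + R) / zetaR α := by
        rw [div_le_div_iff_of_pos_right hζpos]
        linarith
      have hstep0 : 3 ^ (1 - α) * Real.exp (-t) / α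
          = 3 ^ (1 - α) * Real.exp (-t) / (α - 1) / (1 + 1 / (α - 1)) := by
        rw [div_div]
        congr 1
        field_simp
        ring
      rw [hstep0]
      exact hstep2.trans (hstep3.trans hstep4)
    · -- upper bound
      have hstep1 : (T + R) / zetaR α ≤ (T + R) * (α - 1) := by
        rw [div_le_iff₀ hζpos]
        nlinarith [h1, hT_nonneg, hR_nonneg]
      have hstep2 : T + R ≤ Real.exp (-t) / (α - 1) + Real.exp (-t) := by
        have hTe : T ≤ Real.exp (-t) / (α - 1) := by
          refine hT_up.trans ?_
          rw [div_le_div_iff_of_pos_right hα0]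
          exact hR_le
        linarith
      calc (T + R) / zetaR α ≤ (T + R) * (α - 1) := hstep1
        _ ≤ (Real.exp (-t) / (α - 1) + Real.exp (-t)) * (α - 1) :=
            mul_le_mul_of_nonneg_right hstep2 hα0.le
        _ = α * Real.exp (-t) := by field_simp; ring
  have hup : Tendsto (fun α : ℝ => α * Real.exp (-t)) (nhdsWithin 1 (Set.Ioi 1))
      (nhds (Real.exp (-t))) := by
    have h := (continuous_id.mul (continuous_const (y := Real.exp (-t)))).tendsto 1
    simp only [Pi.mul_def, id_eq, one_mul] at h
    exact h.mono_left nhdsWithin_le_nhds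
  have hlo : Tendsto (fun α : ℝ => (3:ℝ) ^ (1 - α) * Real.exp (-t) / α)
      (nhdsWithin 1 (Set.Ioi 1)) (nhds (Real.exp (-t))) := by
    have hrw : ∀ α : ℝ, (3:ℝ) ^ (1 - α) = Real.exp (Real.log 3 * (1 - α)) := fun α =>
      Real.rpow_def_of_pos (by norm_num) _
    have hcont : Tendsto (fun α : ℝ => Real.exp (Real.log 3 * (1 - α)) * Real.exp (-t) / α)
        (nhds 1) (nhds (Real.exp (Real.log 3 * (1 - 1)) * Real.exp (-t) / 1)) := by
      refine ContinuousAt.tendsto ?_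
      exact ContinuousAt.div
        (((Real.continuous_exp.comp
          (continuous_const.mul (continuous_const.sub continuous_id))).mul
            continuous_const).continuousAt)
        continuousAt_id one_ne_zero
    have hval : Real.exp (Real.log 3 * (1 - 1)) * Real.exp (-t) / 1 = Real.exp (-t) := by
      norm_num
    rw [hval] at hcont
    exact (hcont.mono_left nhdsWithin_le_nhds).congr fun α => by rw [← hrw]
  refine tendsto_of_tendsto_of_tendsto_of_le_of_le' hlo hup ?_ ?_
  · filter_upwards [hev] with α hα
    exact (key α hα.1 hα.2).1
  · filter_upwards [hev] with α hα
    exact (key α hα.1 hα.2).2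

end Stmt10Aux

/-- If `d_α` has the delta-Zeta distribution `δζ(α)`, with
`P(d_α = k) = (k/ζ(α))(k^{−α} − (k+1)^{−α})`, then `(α−1) log d_α` converges in
distribution to `Exp(1)` as `α → 1⁺`: for every `t ≥ 0`,
`P((α−1) log d_α ≤ t) → 1 − e^{−t}`. -/
theorem stmt10 (t : ℝ) (ht : 0 ≤ t) :
    Tendsto (fun α : ℝ =>
        ∑' k : ℕ, if (α - 1) * Real.log ((k : ℝ) + 1) ≤ t then
          ((k : ℝ) + 1) * (((k : ℝ) + 1) ^ (-α) - ((k : ℝ) + 2) ^ (-α)) / zetaR α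
        else 0)
      (nhdsWithin 1 (Set.Ioi 1)) (nhds (1 - Real.exp (-t))) := by
  have h := Stmt10Aux.step_tendsto t ht
  have h2 := (tendsto_const_nhds (x := (1:ℝ)) (f := nhdsWithin (1:ℝ) (Set.Ioi 1))).sub h
  refine Tendsto.congr' ?_ h2
  filter_upwards [Ioo_mem_nhdsGT_of_mem (Set.left_mem_Ico.2 one_lt_two)] with α hα
  exact (Stmt10Aux.step_eq t ht hα.1 hα.2).symm
end

section
/- Let α > 1 and let Z_α^{(s)} be a random variable on the squarefree positive integers with P(Z_α^{(s)} = n) = 1/(n^α ζ_{N_s}(α)) for squarefree n, where ζ_{N_s}(α) = ∑_{n squarefree} n^{−α}. Then ζ_{N_s}(α) = ∏_p (1 + p^{−α}), the p-adic valuations (v_p(Z_α^{(s)}))_{p prime} are independent, and v_p(Z_α^{(s)}) is Bernoulli distributed with P(v_p(Z_α^{(s)}) = 1) = 1/(p^α + 1). Equivalently, ∏_p (1 + x_p p^{−α}) = ∑_{n squarefree} n^{−α} ∏_p x_p^{v_p(n)} for all x_p ∈ [0,1]. -/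
open MeasureTheory ProbabilityTheory

/-- `zetaSqf α = ∑_{n squarefree} n^{−α}`. -/
noncomputable def zetaSqf (α : ℝ) : ℝ :=
  ∑' n : ℕ, if Squarefree n then (n : ℝ) ^ (-α) else 0

open scoped ENNReal

namespace Stmt16Aux

open scoped Classical in
/-- classical indicator, no `Decidable` argument -/
noncomputable def ind (P : Prop) (x : ℝ≥0∞) : ℝ≥0∞ := if P then x else 0

lemma ind_pos {P : Prop} (h : P) (x : ℝ≥0∞) : ind P x = x := by simp [ind, h]

lemma ind_neg {P : Prop} (h : ¬ P) (x : ℝ≥0∞) : ind P x = 0 := by simp [ind, h]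

@[simp] lemma ind_true (x : ℝ≥0∞) : ind True x = x := by simp [ind]

@[simp] lemma ind_false (x : ℝ≥0∞) : ind False x = 0 := by simp [ind]

lemma ind_congr {P Q : Prop} (h : P ↔ Q) (x : ℝ≥0∞) : ind P x = ind Q x := by
  simp only [ind]; split_ifs with h1 h2 h2 <;> tauto

noncomputable def f0 (α : ℝ) (n : ℕ) : ℝ≥0∞ := ENNReal.ofReal ((n : ℝ) ^ (-α))

noncomputable def gg (α : ℝ) (p : Nat.Primes) : ℝ≥0∞ := ENNReal.ofReal (((p : ℕ) : ℝ) ^ (-α))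

noncomputable def rr (α : ℝ) (p : Nat.Primes) (s : Set ℕ) : ℝ≥0∞ :=
  ind (0 ∈ s) 1 + ind (1 ∈ s) (gg α p)

noncomputable def HH (α : ℝ) (S : Finset Nat.Primes) (s : Nat.Primes → Set ℕ) : ℝ≥0∞ :=
  ∑' n : ℕ, ind (Squarefree n ∧ ∀ p ∈ S, padicValNat p n ∈ s p) (f0 α n)

noncomputable def cE (α : ℝ) : ℝ≥0∞ := ∑' n : ℕ, ind (Squarefree n) (f0 α n)

lemma val_le_one {p n : ℕ} (hp : p.Prime) (hn : Squarefree n) : padicValNat p n ≤ 1 := by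
  rw [← Nat.factorization_def n hp]
  exact hn.natFactorization_le_one p

lemma split_lemma (α : ℝ) (p₀ : Nat.Primes) (C : ℕ → Prop) :
    (∑' n : ℕ, ind (Squarefree n ∧ padicValNat p₀ n = 0 ∧ C n) (f0 α n))
      + (∑' n : ℕ, ind (Squarefree n ∧ padicValNat p₀ n = 1 ∧ C n) (f0 α n))
    = ∑' n : ℕ, ind (Squarefree n ∧ C n) (f0 α n) := by
  rw [← ENNReal.tsum_add]
  refine tsum_congr fun n => ?_
  by_cases hsf : Squarefree n
  · rcases Nat.le_one_iff_eq_zero_or_eq_one.mp (val_le_one p₀.prop hsf) with hv | hv <;>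
      by_cases hC : C n <;> simp [hsf, hv, hC]
  · simp [hsf]

lemma f0_mul (α : ℝ) (m n : ℕ) : f0 α (m * n) = f0 α m * f0 α n := by
  simp only [f0, Nat.cast_mul]
  rw [Real.mul_rpow (Nat.cast_nonneg m) (Nat.cast_nonneg n),
    ENNReal.ofReal_mul (Real.rpow_nonneg (Nat.cast_nonneg m) _)]

lemma shift_lemma (α : ℝ) (p₀ : Nat.Primes) (C : ℕ → Prop)
    (hC : ∀ n : ℕ, n ≠ 0 → (C ((p₀ : ℕ) * n) ↔ C n)) :
    (∑' n : ℕ, ind (Squarefree n ∧ padicValNat p₀ n = 1 ∧ C n) (f0 α n))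
    = gg α p₀ * ∑' n : ℕ, ind (Squarefree n ∧ padicValNat p₀ n = 0 ∧ C n) (f0 α n) := by
  haveI : Fact (p₀ : ℕ).Prime := ⟨p₀.prop⟩
  have hp0 : (p₀ : ℕ) ≠ 0 := p₀.prop.ne_zero
  set F : ℕ → ℝ≥0∞ := fun n => ind (Squarefree n ∧ padicValNat p₀ n = 1 ∧ C n) (f0 α n)
    with hF
  have hinj : Function.Injective (fun n : ℕ => (p₀ : ℕ) * n) :=
    fun a b h => by simpa [hp0] using h
  have hsupp : Function.support F ⊆ Set.range (fun n : ℕ => (p₀ : ℕ) * n) := by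
    intro n hn
    have hcond : Squarefree n ∧ padicValNat p₀ n = 1 ∧ C n := by
      by_contra h; simp [hF, ind, h] at hn
    obtain ⟨k, rfl⟩ := dvd_of_one_le_padicValNat (le_of_eq hcond.2.1.symm)
    exact ⟨k, rfl⟩
  have key := hinj.tsum_eq hsupp
  rw [← key, ← ENNReal.tsum_mul_left]
  refine tsum_congr fun m => ?_
  rcases eq_or_ne m 0 with rfl | hm
  · simp [hF, not_squarefree_zero]
  by_cases hd : (p₀ : ℕ) ∣ m
  · have h1 : ¬ Squarefree ((p₀ : ℕ) * m) := by
      intro h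
      obtain ⟨k, rfl⟩ := hd
      exact p₀.prop.not_isUnit (h (p₀ : ℕ) ⟨k, by ring⟩)
    have h2 : padicValNat p₀ m ≠ 0 := by
      have := one_le_padicValNat_of_dvd hm hd
      omega
    simp [hF, h1, h2]
  · have hcop : Nat.Coprime (p₀ : ℕ) m := (Nat.Prime.coprime_iff_not_dvd p₀.prop).mpr hd
    have hsf : Squarefree ((p₀ : ℕ) * m) ↔ Squarefree m := by
      rw [Nat.squarefree_mul hcop]
      simp [p₀.prop.squarefree]
    have hv : padicValNat p₀ ((p₀ : ℕ) * m) = 1 := by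
      rw [padicValNat.mul hp0 hm, padicValNat.self p₀.prop.one_lt,
        padicValNat.eq_zero_of_not_dvd hd]
    have hh : f0 α ((p₀ : ℕ) * m) = gg α p₀ * f0 α m := f0_mul α _ m
    simp only [hF, hsf, hv, hC m hm, hh]
    by_cases h : Squarefree m ∧ C m
    · have hv0 : padicValNat p₀ m = 0 := padicValNat.eq_zero_of_not_dvd hd
      rw [ind_pos (by tauto), ind_pos ⟨h.1, hv0, h.2⟩]
    · rw [ind_neg (by tauto), ind_neg (by tauto), mul_zero]

lemma split' (α : ℝ) (p₀ : Nat.Primes) (S : Finset Nat.Primes) (s : Nat.Primes → Set ℕ) :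
    (∑' n : ℕ, ind (Squarefree n ∧ padicValNat p₀ n = 0 ∧ ∀ p ∈ S, padicValNat p n ∈ s p)
        (f0 α n))
      + (∑' n : ℕ, ind (Squarefree n ∧ padicValNat p₀ n = 1 ∧ ∀ p ∈ S, padicValNat p n ∈ s p)
        (f0 α n))
    = HH α S s :=
  split_lemma α p₀ fun n => ∀ p ∈ S, padicValNat p n ∈ s p

lemma shift' (α : ℝ) (p₀ : Nat.Primes) (S : Finset Nat.Primes) (hp₀ : p₀ ∉ S)
    (s : Nat.Primes → Set ℕ) :
    (∑' n : ℕ, ind (Squarefree n ∧ padicValNat p₀ n = 1 ∧ ∀ p ∈ S, padicValNat p n ∈ s p)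
        (f0 α n))
    = gg α p₀ * ∑' n : ℕ, ind (Squarefree n ∧ padicValNat p₀ n = 0 ∧ ∀ p ∈ S,
        padicValNat p n ∈ s p) (f0 α n) := by
  refine shift_lemma α p₀ (fun n => ∀ p ∈ S, padicValNat p n ∈ s p) ?_
  intro n hn
  refine forall₂_congr fun p hp => ?_
  haveI : Fact (p : ℕ).Prime := ⟨p.prop⟩
  have hne : ¬ ((p : ℕ) ∣ (p₀ : ℕ)) := by
    rw [Nat.prime_dvd_prime_iff_eq p.prop p₀.prop]
    intro h
    exact hp₀ (Subtype.ext h ▸ hp)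
  rw [padicValNat.mul p₀.prop.ne_zero hn, padicValNat.eq_zero_of_not_dvd hne, zero_add]

lemma master (α : ℝ) (S : Finset Nat.Primes) (s : Nat.Primes → Set ℕ) :
    HH α S s * ∏ p ∈ S, (1 + gg α p) = cE α * ∏ p ∈ S, rr α p (s p) := by
  induction S using Finset.induction_on with
  | empty => simp [HH, cE]
  | @insert p₀ S hp₀ IH =>
    have hA := split' α p₀ S s
    have hB := shift' α p₀ S hp₀ s
    have hmem : ∀ n : ℕ, (∀ p ∈ insert p₀ S, padicValNat p n ∈ s p)
        ↔ (padicValNat p₀ n ∈ s p₀ ∧ ∀ p ∈ S, padicValNat p n ∈ s p) :=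
      fun n => Finset.forall_mem_insert ..
    have hins : HH α (insert p₀ S) s
        = ind (0 ∈ s p₀)
            (∑' n : ℕ, ind (Squarefree n ∧ padicValNat p₀ n = 0 ∧ ∀ p ∈ S,
              padicValNat p n ∈ s p) (f0 α n))
          + ind (1 ∈ s p₀)
            (∑' n : ℕ, ind (Squarefree n ∧ padicValNat p₀ n = 1 ∧ ∀ p ∈ S,
              padicValNat p n ∈ s p) (f0 α n)) := by
      by_cases h0 : 0 ∈ s p₀ <;> by_cases h1 : 1 ∈ s p₀ <;>
          simp only [h0, h1, ind_true, ind_false, add_zero, zero_add] <;>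
          simp only [HH]
      · rw [← ENNReal.tsum_add]
        refine tsum_congr fun n => ?_
        by_cases hsf : Squarefree n
        · rcases Nat.le_one_iff_eq_zero_or_eq_one.mp (val_le_one p₀.prop hsf) with hv | hv <;>
            simp [hmem n, hsf, hv, h0, h1]
        · simp [hsf]
      · refine tsum_congr fun n => ?_
        by_cases hsf : Squarefree n
        · rcases Nat.le_one_iff_eq_zero_or_eq_one.mp (val_le_one p₀.prop hsf) with hv | hv <;>
            simp [hmem n, hsf, hv, h0, h1]
        · simp [hsf]
      · refine tsum_congr fun n => ?_
        by_cases hsf : Squarefree n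
        · rcases Nat.le_one_iff_eq_zero_or_eq_one.mp (val_le_one p₀.prop hsf) with hv | hv <;>
            simp [hmem n, hsf, hv, h0, h1]
        · simp [hsf]
      · refine (ENNReal.tsum_eq_zero.mpr fun n => ?_)
        by_cases hsf : Squarefree n
        · rcases Nat.le_one_iff_eq_zero_or_eq_one.mp (val_le_one p₀.prop hsf) with hv | hv <;>
            simp [hmem n, hsf, hv, h0, h1]
        · simp [hsf]
    set A0 : ℝ≥0∞ := ∑' n : ℕ, ind (Squarefree n ∧ padicValNat p₀ n = 0 ∧ ∀ p ∈ S,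
        padicValNat p n ∈ s p) (f0 α n) with hA0
    set A1 : ℝ≥0∞ := ∑' n : ℕ, ind (Squarefree n ∧ padicValNat p₀ n = 1 ∧ ∀ p ∈ S,
        padicValNat p n ∈ s p) (f0 α n) with hA1
    rw [Finset.prod_insert hp₀, Finset.prod_insert hp₀, hins]
    have e1 : A0 * (1 + gg α p₀) = HH α S s := by
      calc A0 * (1 + gg α p₀) = A0 + gg α p₀ * A0 := by ring
      _ = A0 + A1 := by rw [← hB]
      _ = HH α S s := hA
    by_cases h0 : 0 ∈ s p₀ <;> by_cases h1 : 1 ∈ s p₀ <;>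
        simp only [rr, h0, h1, ind_true, ind_false, add_zero, zero_add]
    · calc (A0 + A1) * ((1 + gg α p₀) * ∏ p ∈ S, (1 + gg α p))
          = (HH α S s * ∏ p ∈ S, (1 + gg α p)) * (1 + gg α p₀) := by rw [hA]; ring
      _ = (cE α * ∏ p ∈ S, rr α p (s p)) * (1 + gg α p₀) := by rw [IH]
      _ = cE α * ((1 + gg α p₀) * ∏ p ∈ S, rr α p (s p)) := by ring
    · calc A0 * ((1 + gg α p₀) * ∏ p ∈ S, (1 + gg α p))
          = (A0 * (1 + gg α p₀)) * ∏ p ∈ S, (1 + gg α p) := by ring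
      _ = cE α * ∏ p ∈ S, rr α p (s p) := by rw [e1, IH]
      _ = cE α * (1 * ∏ p ∈ S, rr α p (s p)) := by ring
    · calc A1 * ((1 + gg α p₀) * ∏ p ∈ S, (1 + gg α p))
          = gg α p₀ * ((A0 * (1 + gg α p₀)) * ∏ p ∈ S, (1 + gg α p)) := by rw [hB]; ring
      _ = gg α p₀ * (cE α * ∏ p ∈ S, rr α p (s p)) := by rw [e1, IH]
      _ = cE α * (gg α p₀ * ∏ p ∈ S, rr α p (s p)) := by ring
    · simp

lemma summable_sf {α : ℝ} (hα : 1 < α) :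
    Summable (fun n : ℕ => if Squarefree n then (n : ℝ) ^ (-α) else 0) := by
  refine Summable.of_nonneg_of_le (fun n => ?_) (fun n => ?_)
    (Real.summable_nat_rpow.mpr (by linarith : -α < -1))
  · split_ifs <;> positivity
  · split_ifs
    · exact le_refl _
    · positivity

lemma one_le_zetaSqf {α : ℝ} (hα : 1 < α) : 1 ≤ zetaSqf α := by
  have h := Summable.le_tsum (summable_sf hα) 1 (fun n _ => by split_ifs <;> positivity)
  simpa [squarefree_one, zetaSqf] using h

lemma cE_eq {α : ℝ} (hα : 1 < α) : cE α = ENNReal.ofReal (zetaSqf α) := by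
  rw [zetaSqf, ENNReal.ofReal_tsum_of_nonneg (fun n => by split_ifs <;> positivity)
    (summable_sf hα)]
  refine tsum_congr fun n => ?_
  by_cases h : Squarefree n <;> simp [cE, ind, f0, h]

lemma cE_ne_zero {α : ℝ} (hα : 1 < α) : cE α ≠ 0 := by
  rw [cE_eq hα]
  simp only [ne_eq, ENNReal.ofReal_eq_zero, not_le]
  linarith [one_le_zetaSqf hα]

lemma cE_ne_top {α : ℝ} (hα : 1 < α) : cE α ≠ ⊤ := by
  rw [cE_eq hα]; exact ENNReal.ofReal_ne_top

section Measure

variable {Ω : Type*} [MeasurableSpace Ω] (μ : Measure Ω) [IsProbabilityMeasure μ]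
  {α : ℝ} (hα : 1 < α) (Z : Ω → ℕ) (hZ : Measurable Z)
  (hdist : ∀ n : ℕ, μ {ω | Z ω = n} =
    if Squarefree n then ENNReal.ofReal (1 / ((n : ℝ) ^ α * zetaSqf α)) else 0)

include hα hZ hdist

lemma measure_preimage (A : Set ℕ) :
    μ (Z ⁻¹' A) = (∑' n : ℕ, ind (Squarefree n ∧ n ∈ A) (f0 α n)) / cE α := by
  have h1 : Z ⁻¹' A = ⋃ n ∈ A, Z ⁻¹' {n} := by ext ω; simp
  rw [h1, measure_biUnion (Set.to_countable A)
    (fun m _ n _ hmn => (Set.disjoint_singleton.mpr hmn).preimage Z)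
    (fun n _ => hZ (measurableSet_singleton n))]
  rw [tsum_subtype A (fun n => μ (Z ⁻¹' {n}))]
  have hz : 0 < zetaSqf α := by linarith [one_le_zetaSqf hα]
  rw [show (∑' n : ℕ, ind (Squarefree n ∧ n ∈ A) (f0 α n)) / cE α
      = ∑' n : ℕ, ind (Squarefree n ∧ n ∈ A) (f0 α n) / cE α by
    simp only [div_eq_mul_inv]; rw [ENNReal.tsum_mul_right]]
  refine tsum_congr fun n => ?_
  have hpre : Z ⁻¹' {n} = {ω | Z ω = n} := rfl
  by_cases hA : n ∈ A <;> by_cases hsf : Squarefree n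
  · rw [Set.indicator_of_mem hA, hpre, hdist n, if_pos hsf, ind_pos ⟨hsf, hA⟩]
    have hn0 : (0 : ℝ) < (n : ℝ) := by
      exact_mod_cast Nat.pos_of_ne_zero hsf.ne_zero
    have he : (1 : ℝ) / ((n : ℝ) ^ α * zetaSqf α) = (n : ℝ) ^ (-α) / zetaSqf α := by
      rw [Real.rpow_neg hn0.le]
      field_simp
    rw [he, ENNReal.ofReal_div_of_pos hz, cE_eq hα, f0]
  · rw [Set.indicator_of_mem hA, hpre, hdist n, if_neg hsf, ind_neg (by tauto)]
    simp
  · rw [Set.indicator_of_notMem hA, ind_neg (by tauto)]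
    simp
  · rw [Set.indicator_of_notMem hA, ind_neg (by tauto)]
    simp

lemma key_lemma (S : Finset Nat.Primes) (s : Nat.Primes → Set ℕ) :
    μ (Z ⁻¹' {n : ℕ | ∀ p ∈ S, padicValNat p n ∈ s p}) * ∏ p ∈ S, (1 + gg α p)
      = ∏ p ∈ S, rr α p (s p) := by
  rw [measure_preimage μ hα Z hZ hdist]
  have hH : (∑' n : ℕ, ind (Squarefree n ∧ n ∈ {n : ℕ | ∀ p ∈ S, padicValNat p n ∈ s p})
      (f0 α n)) = HH α S s := rfl
  rw [hH]
  calc HH α S s / cE α * ∏ p ∈ S, (1 + gg α p)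
      = (HH α S s * ∏ p ∈ S, (1 + gg α p)) / cE α := by
        simp only [div_eq_mul_inv]; ring
    _ = (cE α * ∏ p ∈ S, rr α p (s p)) / cE α := by rw [master]
    _ = ∏ p ∈ S, rr α p (s p) := by
        rw [mul_comm, mul_div_assoc, ENNReal.div_self (cE_ne_zero hα) (cE_ne_top hα), mul_one]

lemma event_eq (p : Nat.Primes) (s : Set ℕ) :
    μ ((fun ω => padicValNat p (Z ω)) ⁻¹' s) * (1 + gg α p) = rr α p s := by
  have h := key_lemma μ hα Z hZ hdist {p} (fun _ => s)
  simp only [Finset.prod_singleton] at h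
  have hset : Z ⁻¹' {n : ℕ | ∀ q ∈ ({p} : Finset Nat.Primes), padicValNat q n ∈ s}
      = (fun ω => padicValNat p (Z ω)) ⁻¹' s := by
    ext ω; simp
  rw [hset] at h
  exact h

end Measure

lemma one_add_gg_ne_zero (α : ℝ) (p : Nat.Primes) : (1 + gg α p) ≠ 0 := by
  simp

lemma one_add_gg_ne_top (α : ℝ) (p : Nat.Primes) : (1 + gg α p) ≠ ⊤ := by
  simp [gg, ENNReal.add_eq_top]

lemma euler {α : ℝ} (hα : 1 < α) :
    HasProd (fun p : Nat.Primes => 1 + ((p : ℕ) : ℝ) ^ (-α)) (zetaSqf α) := by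
  set F : ℕ → ℝ := fun n => if Squarefree n then (n : ℝ) ^ (-α) else 0 with hFdef
  have hF1 : F 1 = 1 := by simp [hFdef, squarefree_one]
  have hF0 : F 0 = 0 := by simp [hFdef, not_squarefree_zero]
  have hmul : ∀ {m n : ℕ}, Nat.Coprime m n → F (m * n) = F m * F n := by
    intro m n h
    by_cases hm : Squarefree m <;> by_cases hn : Squarefree n
    · have hmn : Squarefree (m * n) := (Nat.squarefree_mul h).mpr ⟨hm, hn⟩
      simp only [hFdef, if_pos hm, if_pos hn, if_pos hmn, Nat.cast_mul]
      exact Real.mul_rpow (Nat.cast_nonneg m) (Nat.cast_nonneg n)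
    · have hmn : ¬ Squarefree (m * n) := fun hc => hn ((Nat.squarefree_mul h).mp hc).2
      simp [hFdef, hmn, hn]
    · have hmn : ¬ Squarefree (m * n) := fun hc => hm ((Nat.squarefree_mul h).mp hc).1
      simp [hFdef, hmn, hm]
    · have hmn : ¬ Squarefree (m * n) := fun hc => hm ((Nat.squarefree_mul h).mp hc).1
      simp [hFdef, hmn, hm]
  have hsum : Summable (fun n => ‖F n‖) := by
    have := (summable_sf hα).abs
    simpa [hFdef, Real.norm_eq_abs] using this
  have HP := EulerProduct.eulerProduct_hasProd hF1 hmul hsum hF0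
  have hfp : ∀ p : Nat.Primes, (∑' e : ℕ, F ((p : ℕ) ^ e)) = 1 + ((p : ℕ) : ℝ) ^ (-α) := by
    intro p
    rw [tsum_eq_sum (s := {0, 1}) ?_]
    · rw [Finset.sum_pair (by norm_num : (0 : ℕ) ≠ 1)]
      simp [hFdef, squarefree_one, p.prop.squarefree]
    · intro e he
      simp only [Finset.mem_insert, Finset.mem_singleton] at he
      push_neg at he
      have : ¬ Squarefree ((p : ℕ) ^ e) := by
        rw [Nat.squarefree_pow_iff p.prop.ne_one he.1]
        rintro ⟨-, h1⟩
        exact he.2 h1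
      simp [hFdef, this]
  have heq : (fun p : Nat.Primes => ∑' e : ℕ, F ((p : ℕ) ^ e))
      = fun p : Nat.Primes => 1 + ((p : ℕ) : ℝ) ^ (-α) := funext hfp
  have hzeta : (∑' n : ℕ, F n) = zetaSqf α := rfl
  rw [heq, hzeta] at HP
  exact HP

end Stmt16Aux

open Stmt16Aux in
/-- If `Z_α^{(s)}` has the squarefree Zeta distribution, `P(Z = n) = 1/(n^α ζ_{N_s}(α))`
for squarefree `n`, then `ζ_{N_s}(α) = ∏_p (1 + p^{−α})`, the `p`-adic valuations of
`Z_α^{(s)}` are independent, and `v_p(Z_α^{(s)})` is Bernoulli with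
`P(v_p = 1) = 1/(p^α + 1)`. -/
theorem stmt16 {Ω : Type*} [MeasurableSpace Ω] (μ : Measure Ω) [IsProbabilityMeasure μ]
    (α : ℝ) (hα : 1 < α) (Z : Ω → ℕ) (hZ : Measurable Z)
    (hdist : ∀ n : ℕ, μ {ω | Z ω = n} =
      if Squarefree n then ENNReal.ofReal (1 / ((n : ℝ) ^ α * zetaSqf α)) else 0) :
    Multipliable (fun p : Nat.Primes => 1 + ((p : ℕ) : ℝ) ^ (-α)) ∧
    zetaSqf α = ∏' p : Nat.Primes, (1 + ((p : ℕ) : ℝ) ^ (-α)) ∧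
    iIndepFun
      (fun (p : Nat.Primes) ω => padicValNat p (Z ω)) μ ∧
    ∀ p : Nat.Primes,
      μ {ω | padicValNat p (Z ω) = 0}
          = ENNReal.ofReal (((p : ℕ) : ℝ) ^ α / (((p : ℕ) : ℝ) ^ α + 1)) ∧
      μ {ω | padicValNat p (Z ω) = 1}
          = ENNReal.ofReal (1 / (((p : ℕ) : ℝ) ^ α + 1)) ∧
      ∀ m : ℕ, 2 ≤ m → μ {ω | padicValNat p (Z ω) = m} = 0 := by
  have hE := euler hα
  refine ⟨hE.multipliable, hE.tprod_eq.symm, ?_, ?_⟩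
  · rw [ProbabilityTheory.iIndepFun_iff_measure_inter_preimage_eq_mul]
    intro S sets _
    have hpre : (⋂ p ∈ S, (fun ω => padicValNat p (Z ω)) ⁻¹' sets p)
        = Z ⁻¹' {n : ℕ | ∀ p ∈ S, padicValNat p n ∈ sets p} := by
      ext ω; simp
    have hkey := key_lemma μ hα Z hZ hdist S sets
    have hP0 : (∏ p ∈ S, (1 + gg α p)) ≠ 0 :=
      Finset.prod_ne_zero_iff.mpr fun p _ => one_add_gg_ne_zero α p
    have hPt : (∏ p ∈ S, (1 + gg α p)) ≠ ⊤ := by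
      refine (ENNReal.prod_lt_top fun p _ => ?_).ne
      exact (one_add_gg_ne_top α p).lt_top
    rw [hpre]
    refine (ENNReal.mul_left_inj hP0 hPt).mp ?_
    rw [hkey, ← Finset.prod_mul_distrib]
    exact (Finset.prod_congr rfl fun p _ => event_eq μ hα Z hZ hdist p (sets p)).symm
  · intro p
    have hx : (0 : ℝ) < ((p : ℕ) : ℝ) ^ α :=
      Real.rpow_pos_of_pos (by exact_mod_cast p.prop.pos) α
    have hr : ((p : ℕ) : ℝ) ^ (-α) = (((p : ℕ) : ℝ) ^ α)⁻¹ := by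
      rw [Real.rpow_neg (Nat.cast_nonneg _)]
    have h1g : (1 + gg α p) = ENNReal.ofReal (1 + ((p : ℕ) : ℝ) ^ (-α)) := by
      rw [ENNReal.ofReal_add (by norm_num) (Real.rpow_nonneg (Nat.cast_nonneg _) _),
        ENNReal.ofReal_one, gg]
    have hcan : ∀ (m : ℕ) (w : ℝ≥0∞), w * (1 + gg α p) = rr α p ({m} : Set ℕ) →
        μ {ω | padicValNat p (Z ω) = m} = w := by
      intro m w hw
      have h := event_eq μ hα Z hZ hdist p ({m} : Set ℕ)
      have hset : (fun ω => padicValNat p (Z ω)) ⁻¹' ({m} : Set ℕ)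
          = {ω | padicValNat p (Z ω) = m} := rfl
      rw [hset] at h
      exact (ENNReal.mul_left_inj (one_add_gg_ne_zero α p)
        (one_add_gg_ne_top α p)).mp (h.trans hw.symm)
    refine ⟨?_, ?_, ?_⟩
    · refine hcan 0 _ ?_
      have hrr : rr α p ({0} : Set ℕ) = 1 := by
        simp [rr, Set.mem_singleton_iff]
      rw [hrr, h1g, ← ENNReal.ofReal_mul (by positivity)]
      rw [show ((p : ℕ) : ℝ) ^ α / (((p : ℕ) : ℝ) ^ α + 1) * (1 + ((p : ℕ) : ℝ) ^ (-α)) = 1 by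
        rw [hr]; field_simp]
      exact ENNReal.ofReal_one
    · refine hcan 1 _ ?_
      have hrr : rr α p ({1} : Set ℕ) = gg α p := by
        simp [rr, Set.mem_singleton_iff]
      rw [hrr, h1g, ← ENNReal.ofReal_mul (by positivity), gg]
      congr 1
      rw [hr]
      field_simp
    · intro m hm
      refine hcan m 0 ?_
      have hrr : rr α p ({m} : Set ℕ) = 0 := by
        have h0 : ¬ (0 : ℕ) ∈ ({m} : Set ℕ) := by
          simp only [Set.mem_singleton_iff]; omega
        have h1 : ¬ (1 : ℕ) ∈ ({m} : Set ℕ) := by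
          simp only [Set.mem_singleton_iff]; omega
        simp [rr, h0, h1]
      rw [hrr, zero_mul]
end

section
/- Let α > 1 and let Y_α be the random variable on (0,∞) with probability density t ↦ (e^{−t}/(1 − e^{−t})) · t^{α−1}/(Γ(α) ζ(α)) (a probability density since ζ(α) = ∫_0^∞ (e^{−t}/(1−e^{−t})) t^{α−1} dt / Γ(α)). Let γ_α have the Gamma distribution with shape α (density t^{α−1}e^{−t}/Γ(α)), Z_α the Zeta distribution ζ(α), and d_α the delta-Zeta distribution δζ(α), with γ_α and Z_α independent. Then: (i) Y_α has the same distribution as γ_α / Z_α; (ii) Z_α has the same distribution as 1 + G, where conditionally on Y_α, G ∼ Geom(e^{−Y_α}); (iii) d_α has the same distribution as 1 + N, where conditionally on Y_α, N ∼ NegBin(e^{−Y_α}, 2), i.e. P(N = k | Y_α = t) = (1 − e^{−t})² (k+1) e^{−kt}. -/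
open MeasureTheory ProbabilityTheory

/-- The density of `Y_α`: `t ↦ (e^{−t}/(1−e^{−t})) t^{α−1}/(Γ(α) ζ(α))` on `(0,∞)`. -/
noncomputable def Ydens (α : ℝ) (u : ℝ) : ℝ :=
  Real.exp (-u) / (1 - Real.exp (-u)) * u ^ (α - 1) / (Real.Gamma α * zetaR α)

section Helpers
open Set Real

lemma zsummable {α : ℝ} (hα : 1 < α) : Summable (fun n : ℕ => ((n : ℝ) + 1) ^ (-α)) := by
  have h : Summable (fun n : ℕ => (n : ℝ) ^ (-α)) :=
    Real.summable_nat_rpow.2 (by linarith)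
  have := h.comp_injective (add_left_injective 1)
  refine this.congr fun n => ?_
  simp [Function.comp]

lemma zpos {α : ℝ} (hα : 1 < α) : 0 < zetaR α := by
  refine Summable.tsum_pos (zsummable hα) (fun n => Real.rpow_nonneg (by positivity) _) 0 ?_
  norm_num

lemma LA {a b : ℝ} (ha : 0 < a) (hb : 0 < b) :
    IntegrableOn (fun u : ℝ => u ^ (a - 1) * Real.exp (-(b * u))) (Ioi 0) := by
  have h1 : IntegrableOn (fun x : ℝ => Real.exp (-(b * x)) * (b * x) ^ (a - 1)) (Ioi 0) := by
    have := Real.GammaIntegral_convergent ha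
    rw [← mul_zero b, ← integrableOn_Ioi_comp_mul_left_iff _ _ hb] at this
    simpa using this
  refine IntegrableOn.congr_fun (h1.const_mul (b ^ (1 - a))) (fun u hu => ?_) measurableSet_Ioi
  have hu0 : (0:ℝ) < u := hu
  rw [Real.mul_rpow hb.le hu0.le, ← mul_assoc, mul_comm (b ^ (1-a)) (Real.exp _), mul_assoc,
    ← mul_assoc (b ^ (1-a)), ← Real.rpow_add hb]
  norm_num
  ring

lemma LB {a b : ℝ} (ha : 0 < a) (hb : 0 < b) :
    ∫ u in Ioi (0:ℝ), u ^ (a - 1) * Real.exp (-(b * u)) = b ^ (-a) * Real.Gamma a := by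
  rw [Real.integral_rpow_mul_exp_neg_mul_Ioi ha hb, one_div,
    Real.inv_rpow hb.le, ← Real.rpow_neg hb.le]

lemma Lhs {u : ℝ} (hu : 0 < u) :
    HasSum (fun n : ℕ => Real.exp (-(((n : ℝ) + 1) * u)))
      (Real.exp (-u) / (1 - Real.exp (-u))) := by
  have h0 : (0:ℝ) ≤ Real.exp (-u) := (Real.exp_pos _).le
  have h1 : Real.exp (-u) < 1 := Real.exp_lt_one_iff.2 (by linarith)
  have := (hasSum_geometric_of_lt_one h0 h1).mul_left (Real.exp (-u))
  rw [div_eq_mul_inv]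
  have key : (fun n : ℕ => Real.exp (-u) * Real.exp (-u) ^ n)
      = fun n : ℕ => Real.exp (-(((n : ℝ) + 1) * u)) := by
    funext n
    rw [← pow_succ']
    rw [← Real.exp_nat_mul]
    congr 1
    push_cast
    ring
  rwa [key] at this

lemma LYd {α : ℝ} {u : ℝ} (hu : 0 < u) :
    HasSum (fun n : ℕ => u ^ (α - 1) * Real.exp (-(((n : ℝ) + 1) * u)) / (Real.Gamma α * zetaR α))
      (Ydens α u) := by
  have := ((Lhs hu).mul_left (u ^ (α - 1))).div_const (Real.Gamma α * zetaR α)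
  unfold Ydens
  rw [mul_comm (Real.exp (-u) / (1 - Real.exp (-u)))]
  exact this

lemma Ydens_meas (α : ℝ) : Measurable (Ydens α) := by
  unfold Ydens
  fun_prop

lemma Ydens_nonneg {α : ℝ} (hα : 1 < α) {u : ℝ} (hu : 0 < u) : 0 ≤ Ydens α u := by
  have h1 : Real.exp (-u) < 1 := Real.exp_lt_one_iff.2 (by linarith)
  have h2 := zpos hα
  have h3 := Real.Gamma_pos_of_pos (by linarith : (0:ℝ) < α)
  have h4 : 0 < 1 - Real.exp (-u) := by linarith
  unfold Ydens
  exact div_nonneg (mul_nonneg (div_nonneg (Real.exp_pos _).le h4.le)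
    (Real.rpow_nonneg hu.le _)) (by positivity)

lemma lint_eq {α : ℝ} (hα : 1 < α) {s : Set ℝ} (hs : MeasurableSet s) (hsub : s ⊆ Ioi 0) :
    ∫⁻ u in s, ENNReal.ofReal (Ydens α u)
      = ∑' n : ℕ, ENNReal.ofReal
          (∫ u in s, u ^ (α - 1) * Real.exp (-(((n : ℝ) + 1) * u))
            / (Real.Gamma α * zetaR α)) := by
  have hα0 : (0:ℝ) < α := by linarith
  have hΓ : 0 < Real.Gamma α := Real.Gamma_pos_of_pos hα0
  have hζ := zpos hα
  set f : ℕ → ℝ → ℝ := fun n u =>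
    u ^ (α - 1) * Real.exp (-(((n : ℝ) + 1) * u)) / (Real.Gamma α * zetaR α) with hf
  have hfm : ∀ n : ℕ, Measurable (f n) := fun n => by unfold f; fun_prop
  have hfint : ∀ n : ℕ, IntegrableOn (f n) s := fun n =>
    IntegrableOn.mono_set
      ((LA hα0 (by positivity : (0:ℝ) < (n:ℝ) + 1)).div_const _ : IntegrableOn _ _ _) hsub
  have hfnn : ∀ n : ℕ, ∀ u ∈ s, 0 ≤ f n u := fun n u hu => by
    have hu0 : (0:ℝ) < u := hsub hu
    unfold f
    positivity
  calc ∫⁻ u in s, ENNReal.ofReal (Ydens α u)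
      = ∫⁻ u in s, ∑' n : ℕ, ENNReal.ofReal (f n u) := by
        refine setLIntegral_congr_fun hs (fun u hu => ?_)
        have h := LYd (α := α) (hsub hu)
        rw [← h.tsum_eq, ENNReal.ofReal_tsum_of_nonneg (fun n => hfnn n u hu) h.summable]
    _ = ∑' n : ℕ, ∫⁻ u in s, ENNReal.ofReal (f n u) :=
        lintegral_tsum fun n => (ENNReal.measurable_ofReal.comp (hfm n)).aemeasurable
    _ = ∑' n : ℕ, ENNReal.ofReal (∫ u in s, f n u) := by
        refine tsum_congr fun n => ?_
        refine (ofReal_integral_eq_lintegral_ofReal (hfint n) ?_).symm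
        exact (ae_restrict_iff' hs).2 (ae_of_all _ fun u hu => hfnn n u hu)

lemma LS {α : ℝ} (hα : 1 < α) {c : ℝ} (hc : 0 < c) (s : ℝ) :
    ∫ u in Ioc (0:ℝ) (c * s), u ^ (α - 1) * Real.exp (-u)
      = c ^ α * ∫ u in Ioc (0:ℝ) s, u ^ (α - 1) * Real.exp (-(c * u)) := by
  rcases le_or_gt s 0 with h | h
  · rw [Ioc_eq_empty (by simpa using mul_nonpos_of_nonneg_of_nonpos hc.le h),
      Ioc_eq_empty (by simpa using h)]
    simp
  · rw [← intervalIntegral.integral_of_le (by positivity : (0:ℝ) ≤ c * s),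
      ← intervalIntegral.integral_of_le h.le]
    have h1 := intervalIntegral.smul_integral_comp_mul_left
      (fun u : ℝ => u ^ (α - 1) * Real.exp (-u)) (a := 0) (b := s) c
    simp only [mul_zero] at h1
    rw [← h1, smul_eq_mul]
    have h2 : ∫ u in (0:ℝ)..s, (c * u) ^ (α - 1) * Real.exp (-(c * u))
        = ∫ u in (0:ℝ)..s, c ^ (α - 1) * (u ^ (α - 1) * Real.exp (-(c * u))) := by
      rw [intervalIntegral.integral_of_le h.le, intervalIntegral.integral_of_le h.le]
      refine setIntegral_congr_fun measurableSet_Ioc fun u hu => ?_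
      rw [Real.mul_rpow hc.le hu.1.le]
      ring
    rw [h2, intervalIntegral.integral_const_mul, ← mul_assoc]
    congr 1
    nth_rewrite 1 [← Real.rpow_one c]
    rw [← Real.rpow_add hc]
    norm_num

lemma hlint_Ioi {α : ℝ} (hα : 1 < α) :
    ∫⁻ u in Ioi (0:ℝ), ENNReal.ofReal (Ydens α u) = 1 := by
  have hα0 : (0:ℝ) < α := by linarith
  have hΓ : 0 < Real.Gamma α := Real.Gamma_pos_of_pos hα0
  have hζ := zpos hα
  rw [lint_eq hα measurableSet_Ioi (subset_refl _)]
  have hval : ∀ n : ℕ, (∫ u in Ioi (0:ℝ),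
      u ^ (α - 1) * Real.exp (-(((n:ℝ)+1) * u)) / (Real.Gamma α * zetaR α))
      = ((n:ℝ)+1) ^ (-α) / zetaR α := by
    intro n
    rw [integral_div, LB hα0 (by positivity : (0:ℝ) < (n:ℝ)+1)]
    field_simp
  simp only [hval]
  rw [← ENNReal.ofReal_tsum_of_nonneg
      (fun n => div_nonneg (Real.rpow_nonneg (by positivity) _) hζ.le)
      ((zsummable hα).div_const _), tsum_div_const]
  rw [show (∑' n : ℕ, ((n:ℝ)+1) ^ (-α)) = zetaR α from rfl, div_self hζ.ne']
  exact ENNReal.ofReal_one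

lemma hYint {α : ℝ} (hα : 1 < α) : IntegrableOn (Ydens α) (Ioi 0) := by
  refine ⟨(Ydens_meas α).aestronglyMeasurable, ?_⟩
  rw [hasFiniteIntegral_iff_norm]
  have : ∫⁻ u in Ioi (0:ℝ), ENNReal.ofReal ‖Ydens α u‖
      = ∫⁻ u in Ioi (0:ℝ), ENNReal.ofReal (Ydens α u) := by
    refine setLIntegral_congr_fun measurableSet_Ioi (fun u hu => ?_)
    rw [Real.norm_eq_abs, abs_of_nonneg (Ydens_nonneg hα hu)]
  rw [this, hlint_Ioi hα]
  exact ENNReal.one_lt_top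

lemma part1 {α : ℝ} (hα : 1 < α) : (∫ u in Set.Ioi (0 : ℝ), Ydens α u) = 1 := by
  have h := ofReal_integral_eq_lintegral_ofReal (hYint hα)
    ((ae_restrict_iff' measurableSet_Ioi).2 (ae_of_all _ fun u hu => Ydens_nonneg hα hu))
  rw [hlint_Ioi hα] at h
  have hnn : 0 ≤ ∫ u in Set.Ioi (0 : ℝ), Ydens α u :=
    setIntegral_nonneg measurableSet_Ioi fun u hu => Ydens_nonneg hα hu
  rw [← ENNReal.ofReal_one] at h
  exact (ENNReal.ofReal_eq_ofReal_iff hnn zero_le_one).1 h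

lemma part2 {Ω : Type*} [MeasurableSpace Ω] (μ : Measure Ω) [IsProbabilityMeasure μ]
    {α : ℝ} (hα : 1 < α) (G : Ω → ℝ) (Z : Ω → ℕ)
    (hGm : Measurable G) (hZm : Measurable Z)
    (hindep : IndepFun G Z μ)
    (hGdist : ∀ s : ℝ, μ {ω | G ω ≤ s} =
      ENNReal.ofReal (∫ u in Set.Ioc 0 s, u ^ (α - 1) * Real.exp (-u) / Real.Gamma α))
    (hZdist : ∀ k : ℕ, 1 ≤ k →
      μ {ω | Z ω = k} = ENNReal.ofReal (1 / (zetaR α * (k : ℝ) ^ α)))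
    (hZ0 : μ {ω | Z ω = 0} = 0) (s : ℝ) :
    μ {ω | G ω / (Z ω : ℝ) ≤ s} = ENNReal.ofReal (∫ u in Set.Ioc 0 s, Ydens α u) := by
  have hα0 : (0:ℝ) < α := by linarith
  have hΓ : 0 < Real.Gamma α := Real.Gamma_pos_of_pos hα0
  have hζ := zpos hα
  set S : ℕ → Set Ω := fun k => {ω | Z ω = k + 1} ∩ {ω | G ω ≤ ((k:ℝ) + 1) * s} with hS
  -- Step A
  have hAdiff : {ω | G ω / (Z ω : ℝ) ≤ s} \ {ω | Z ω = 0} = ⋃ k, S k := by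
    ext ω
    simp only [hS, mem_diff, mem_setOf_eq, mem_iUnion, mem_inter_iff]
    constructor
    · rintro ⟨h1, h2⟩
      obtain ⟨k, hk⟩ := Nat.exists_eq_succ_of_ne_zero h2
      refine ⟨k, by exact_mod_cast hk, ?_⟩
      rw [hk] at h1
      push_cast at h1
      have hpos : (0:ℝ) < (k:ℝ) + 1 := by positivity
      rw [div_le_iff₀ hpos] at h1
      linarith
    · rintro ⟨k, h1, h2⟩
      have hpos : (0:ℝ) < (k:ℝ) + 1 := by positivity
      refine ⟨?_, by omega⟩
      rw [h1]
      push_cast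
      rw [div_le_iff₀ hpos]
      linarith
  have hSm : ∀ k, MeasurableSet (S k) := fun k =>
    (hZm (measurableSet_singleton (k+1))).inter (hGm measurableSet_Iic)
  have hSd : Pairwise (Function.onFun Disjoint S) := by
    intro i j hij
    refine Disjoint.mono inter_subset_left inter_subset_left ?_
    rw [Set.disjoint_left]
    intro ω h1 h2
    simp only [mem_setOf_eq] at h1 h2
    omega
  have hstepA : μ {ω | G ω / (Z ω : ℝ) ≤ s} = ∑' k, μ (S k) := by
    rw [← measure_diff_null hZ0, hAdiff, measure_iUnion hSd hSm]
  -- Step B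
  have hstepB : ∀ k : ℕ, μ (S k)
      = ENNReal.ofReal (∫ u in Ioc (0:ℝ) s,
          u ^ (α - 1) * Real.exp (-(((k:ℝ) + 1) * u)) / (Real.Gamma α * zetaR α)) := by
    intro k
    have hc : (0:ℝ) < (k:ℝ) + 1 := by positivity
    have hindepk := hindep.measure_inter_preimage_eq_mul
      (Iic (((k:ℝ) + 1) * s)) {k + 1} measurableSet_Iic (measurableSet_singleton _)
    have hSeq : S k = G ⁻¹' Iic (((k:ℝ) + 1) * s) ∩ Z ⁻¹' {k + 1} := by
      rw [hS, Set.inter_comm]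
      rfl
    rw [hSeq, hindepk]
    have h1 : μ (G ⁻¹' Iic (((k:ℝ) + 1) * s))
        = ENNReal.ofReal (∫ u in Set.Ioc 0 (((k:ℝ) + 1) * s),
            u ^ (α - 1) * Real.exp (-u) / Real.Gamma α) := hGdist _
    have h2 : μ (Z ⁻¹' {k + 1}) = ENNReal.ofReal (1 / (zetaR α * ((k:ℝ) + 1) ^ α)) := by
      have := hZdist (k + 1) (by omega)
      push_cast at this
      exact this
    rw [h1, h2, ← ENNReal.ofReal_mul
      (setIntegral_nonneg measurableSet_Ioc fun u hu => by
        have := hu.1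
        positivity)]
    congr 1
    rw [integral_div, integral_div, LS hα hc s]
    have hcα : (0:ℝ) < ((k:ℝ) + 1) ^ α := Real.rpow_pos_of_pos hc α
    field_simp
  rw [hstepA]
  simp only [hstepB]
  rw [← lint_eq hα measurableSet_Ioc Ioc_subset_Ioi_self,
    ← ofReal_integral_eq_lintegral_ofReal ((hYint hα).mono_set Ioc_subset_Ioi_self)
      ((ae_restrict_iff' measurableSet_Ioc).2 (ae_of_all _ fun u hu => Ydens_nonneg hα hu.1))]

lemma part3 {α : ℝ} (hα : 1 < α) (k : ℕ) (hk1 : 1 ≤ k) :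
      1 / (zetaR α * (k : ℝ) ^ α)
        = ∫ u in Set.Ioi (0 : ℝ),
            (1 - Real.exp (-u)) * Real.exp (-((k : ℝ) - 1) * u) * Ydens α u := by
  have hα0 : (0:ℝ) < α := by linarith
  have hΓ : 0 < Real.Gamma α := Real.Gamma_pos_of_pos hα0
  have hζ := zpos hα
  have hk : (0:ℝ) < (k:ℝ) := by exact_mod_cast hk1
  have hcong : EqOn (fun u => (1 - Real.exp (-u)) * Real.exp (-((k : ℝ) - 1) * u) * Ydens α u)
      (fun u => u ^ (α - 1) * Real.exp (-((k:ℝ) * u)) / (Real.Gamma α * zetaR α)) (Ioi 0) := by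
    intro u hu
    have h1 : Real.exp (-u) < 1 := Real.exp_lt_one_iff.2 (by simpa using hu)
    have h2 : 1 - Real.exp (-u) ≠ 0 := by linarith
    have h3 : Real.exp (-((k:ℝ) * u)) = Real.exp (-((k:ℝ)-1) * u) * Real.exp (-u) := by
      rw [← Real.exp_add]; ring_nf
    simp only [Ydens]
    rw [h3]
    field_simp
  rw [setIntegral_congr_fun measurableSet_Ioi hcong, integral_div, LB hα0 hk,
    Real.rpow_neg hk.le]
  rw [div_eq_div_iff (by positivity) (by positivity)]
  field_simp


lemma part4 {α : ℝ} (hα : 1 < α) (k : ℕ) (hk1 : 1 ≤ k) :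
      (k : ℝ) * ((k : ℝ) ^ (-α) - ((k : ℝ) + 1) ^ (-α)) / zetaR α
        = ∫ u in Set.Ioi (0 : ℝ),
            (1 - Real.exp (-u)) ^ 2 * (k : ℝ) * Real.exp (-((k : ℝ) - 1) * u) *
              Ydens α u := by
  have hα0 : (0:ℝ) < α := by linarith
  have hΓ : 0 < Real.Gamma α := Real.Gamma_pos_of_pos hα0
  have hζ := zpos hα
  have hk : (0:ℝ) < (k:ℝ) := by exact_mod_cast hk1
  have hcong : EqOn (fun u => (1 - Real.exp (-u)) ^ 2 * (k : ℝ) *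
        Real.exp (-((k : ℝ) - 1) * u) * Ydens α u)
      (fun u => (k:ℝ) / (Real.Gamma α * zetaR α) *
        (u ^ (α - 1) * Real.exp (-((k:ℝ) * u))
          - u ^ (α - 1) * Real.exp (-(((k:ℝ) + 1) * u)))) (Ioi 0) := by
    intro u hu
    have h1 : Real.exp (-u) < 1 := Real.exp_lt_one_iff.2 (by simpa using hu)
    have h2 : 1 - Real.exp (-u) ≠ 0 := by linarith
    have h3 : Real.exp (-((k:ℝ) * u)) = Real.exp (-((k:ℝ)-1) * u) * Real.exp (-u) := by
      rw [← Real.exp_add]; ring_nf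
    have h4 : Real.exp (-(((k:ℝ) + 1) * u))
        = Real.exp (-((k:ℝ)-1) * u) * Real.exp (-u) * Real.exp (-u) := by
      rw [← Real.exp_add, ← Real.exp_add]; ring_nf
    simp only [Ydens]
    rw [h3, h4]
    field_simp
  rw [setIntegral_congr_fun measurableSet_Ioi hcong, integral_const_mul,
    integral_sub (LA hα0 hk) (LA hα0 (by positivity)), LB hα0 hk, LB hα0 (by positivity)]
  field_simp

end Helpers

/-- Let `α > 1`, let `γ_α ∼ Gamma(α)` and `Z_α ∼ ζ(α)` be independent. Then the density
`Ydens α` of `Y_α` is a probability density, and: (i) `Y_α =law γ_α/Z_α`; (ii)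
`Z_α =law 1 + G` where conditionally on `Y_α = t`, `G ∼ Geom(e^{−t})`; (iii)
`d_α =law 1 + N` where conditionally on `Y_α = t`, `N ∼ NegBin(e^{−t}, 2)`, `d_α` having
the delta-Zeta distribution `P(d_α = k) = (k/ζ(α))(k^{−α} − (k+1)^{−α})`. -/
theorem stmt19 {Ω : Type*} [MeasurableSpace Ω] (μ : Measure Ω) [IsProbabilityMeasure μ]
    (α : ℝ) (hα : 1 < α) (G : Ω → ℝ) (Z : Ω → ℕ)
    (hGm : Measurable G) (hZm : Measurable Z)
    (hindep : IndepFun G Z μ)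
    (hGdist : ∀ s : ℝ, μ {ω | G ω ≤ s} =
      ENNReal.ofReal (∫ u in Set.Ioc 0 s, u ^ (α - 1) * Real.exp (-u) / Real.Gamma α))
    (hZdist : ∀ k : ℕ, 1 ≤ k →
      μ {ω | Z ω = k} = ENNReal.ofReal (1 / (zetaR α * (k : ℝ) ^ α)))
    (hZ0 : μ {ω | Z ω = 0} = 0) :
    (∫ u in Set.Ioi (0 : ℝ), Ydens α u) = 1 ∧
    (∀ s : ℝ, μ {ω | G ω / (Z ω : ℝ) ≤ s}
        = ENNReal.ofReal (∫ u in Set.Ioc 0 s, Ydens α u)) ∧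
    (∀ k : ℕ, 1 ≤ k →
      1 / (zetaR α * (k : ℝ) ^ α)
        = ∫ u in Set.Ioi (0 : ℝ),
            (1 - Real.exp (-u)) * Real.exp (-((k : ℝ) - 1) * u) * Ydens α u) ∧
    (∀ k : ℕ, 1 ≤ k →
      (k : ℝ) * ((k : ℝ) ^ (-α) - ((k : ℝ) + 1) ^ (-α)) / zetaR α
        = ∫ u in Set.Ioi (0 : ℝ),
            (1 - Real.exp (-u)) ^ 2 * (k : ℝ) * Real.exp (-((k : ℝ) - 1) * u) *
              Ydens α u) := by
  exact ⟨part1 hα, fun s => part2 μ hα G Z hGm hZm hindep hGdist hZdist hZ0 s,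
    fun k hk => part3 hα k hk, fun k hk => part4 hα k hk⟩
end
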